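/- arXiv:1604.06931 — 4 statements merged into one kernel-verified Lean document; each statement's English description precedes it below -/
import Mathlib

section
/- Let Γ be a finite simple graph on vertex set V with |V| = n, and let P be a polynomial in one variable t with coefficients in ℤ[q] such that for every natural number d, P evaluated at d equals χ_q(Γ,d). Then, as an identity of polynomials in ℤ[q], (−1)^n · (P evaluated at t = −1, with q replaced by −q) = Σ over all flats F of Γ of a(Γ/F)·q^{rk(F)}. -/
open Polynomial

/-- The graphical zonotope of `G`, as the Minkowski sum over the edges `{i,j}` of `G`
of the segments `[-(e_i - e_j), e_i - e_j]`, described via antisymmetric coefficient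
functions supported on edges. -/
def graphicalZonotope {V : Type} [Fintype V] [DecidableEq V] (G : SimpleGraph V) :
    Set (V → ℝ) :=
  { x | ∃ c : V → V → ℝ, (∀ u v, c u v = - c v u) ∧ (∀ u v, ¬ G.Adj u v → c u v = 0) ∧
      (∀ u v, |c u v| ≤ 1) ∧ x = fun w => ∑ u, c w u }

/-- `faceCount G k` is the number of nonempty exposed faces of the graphical zonotope of `G`
whose affine span has dimension `k`. -/
noncomputable def faceCount {V : Type} [Fintype V] [DecidableEq V] (G : SimpleGraph V)
    (k : ℕ) : ℕ :=
  Nat.card { F : Set (V → ℝ) // F.Nonempty ∧ IsExposed ℝ (graphicalZonotope G) F ∧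
      Module.finrank ℝ (affineSpan ℝ F).direction = k }

/-- The number of acyclic orientations of `G`. -/
noncomputable def acyclicOrientationCount {V : Type} (G : SimpleGraph V) : ℕ :=
  Nat.card { r : V → V → Prop // (∀ u v, r u v → G.Adj u v) ∧
      (∀ u v, G.Adj u v → Xor' (r u v) (r v u)) ∧ (∀ v, ¬ Relation.TransGen r v v) }

/-- rank of the induced subgraph on `s` : `|s| - #components`. -/
noncomputable def inducedRank {V : Type} (G : SimpleGraph V) (s : Set V) : ℕ :=
  Nat.card s - Nat.card (G.induce s).ConnectedComponent

/-- The `q`-analog of the chromatic polynomial evaluated at `d` colors, an element of `ℤ[q]`. -/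
noncomputable def chromQ {V : Type} [Fintype V] [DecidableEq V] (G : SimpleGraph V) (d : ℕ) : Polynomial ℤ :=
  ∑ f : V → Fin d, (X : Polynomial ℤ) ^ (∑ i : Fin d, inducedRank G (f ⁻¹' {i}))

/-- `H` is (the spanning subgraph determined by) a flat of `G`. -/
def IsFlatOf {V : Type} (G H : SimpleGraph V) : Prop :=
  H ≤ G ∧ ∀ u v, G.Adj u v → H.Reachable u v → H.Adj u v

/-- The rank of a spanning subgraph `H`: `|V| - c(H)`. -/
noncomputable def flatRank {V : Type} [Fintype V] (H : SimpleGraph V) : ℕ :=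
  Fintype.card V - Nat.card H.ConnectedComponent

/-- The contraction `G/H`: vertices are the connected components of `H`, two distinct
components being adjacent iff some edge of `G` joins them. -/
def contractFlat {V : Type} (G H : SimpleGraph V) : SimpleGraph H.ConnectedComponent where
  Adj C D := C ≠ D ∧ ∃ u v, G.Adj u v ∧ H.connectedComponentMk u = C ∧
      H.connectedComponentMk v = D
  symm := by
    constructor
    rintro C D ⟨hne, u, v, hadj, hu, hv⟩
    exact ⟨hne.symm, v, u, hadj.symm, hv, hu⟩
  loopless := by constructor; rintro C ⟨hne, -⟩; exact hne rfl

/-!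
Group the maps `f : V → Fin d` by the flat `F` spanned by their monochromatic edges: `f`
contributes `q^{rk F}`, and the maps with a given `F` are exactly the proper colorings of `Γ/F`.
Hence `χ_q(Γ, d) = ∑_F χ(Γ/F, d) q^{rk F}` with `χ` the chromatic polynomial, and as both sides
are polynomial in `d`, `P = ∑_F χ(Γ/F, t) q^{rk F}`. Stanley's theorem
`χ(Γ, -1) = (-1)^{|V|} a(Γ)` follows by induction from the deletion–contraction recursions
`χ(Γ - e) = χ(Γ) + χ(Γ/e)` and `a(Γ) = a(Γ - e) + a(Γ/e)`, and at `t = -1`, `q ↦ -q` the signs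
cancel because `rk F + c(F) = |V|`.
-/

open Relation

theorem Nat.card_subtype_and_add_card_subtype_and_not {α : Type*} [Finite α] (p q : α → Prop) :
    Nat.card {x // p x ∧ q x} + Nat.card {x // p x ∧ ¬ q x} = Nat.card {x // p x} := by
  classical
  rw [← Nat.card_sum]
  exact Nat.card_congr <| ((Equiv.subtypeSubtypeEquivSubtypeInter p q).symm.sumCongr
    (Equiv.subtypeSubtypeEquivSubtypeInter p (¬ q ·)).symm).trans (Equiv.sumCompl _)

namespace Polynomial

theorem eq_of_eval_natCast_eq {R : Type*} [CommRing R] [IsDomain R] [CharZero R]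
    {p q : R[X]} (h : ∀ n : ℕ, p.eval (n : R) = q.eval (n : R)) : p = q :=
  eq_of_infinite_eval_eq p q (Set.infinite_of_injective_forall_mem Nat.cast_injective h)

theorem neg_one_pow_mul_comp_neg_X (k m a : ℕ) :
    (-1) ^ (k + m) * (X ^ k * C ((-1) ^ m * (a : ℤ)) : ℤ[X]).comp (-X) =
      (a : ℤ[X]) * X ^ k := by
  simp only [mul_comp, X_comp, natCast_comp, map_mul, map_pow, map_neg, map_one, map_natCast,
    pow_comp, neg_comp, one_comp, neg_pow (X : ℤ[X]), pow_add]
  have h (j : ℕ) : ((-1 : ℤ[X]) ^ j) * (-1) ^ j = 1 := by rw [← mul_pow]; norm_num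
  linear_combination
    (X ^ k * (a : ℤ[X]) * (-1) ^ m * (-1) ^ m) * h k + (X ^ k * (a : ℤ[X])) * h m

end Polynomial

namespace Relation

variable {α β : Type*} {r : α → α → Prop}

theorem transGen_or_eq_pair {p q a b : α}
    (h : TransGen (fun x y => r x y ∨ (x = p ∧ y = q)) a b) :
    TransGen r a b ∨ (ReflTransGen r a p ∧ ReflTransGen r q b) := by
  induction h with
  | single h =>
    rcases h with h | ⟨rfl, rfl⟩
    · exact .inl (.single h)
    · exact .inr ⟨.refl, .refl⟩
  | tail _ h ih =>
    rcases h with h | ⟨rfl, rfl⟩ <;> rcases ih with ih | ⟨ih₁, ih₂⟩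
    · exact .inl (ih.tail h)
    · exact .inr ⟨ih₁, ih₂.tail h⟩
    · exact .inr ⟨ih.to_reflTransGen, .refl⟩
    · exact .inr ⟨ih₁, .refl⟩

theorem not_transGen_or_eq_pair_self {p q : α} (hpq : p ≠ q) (hr : ∀ a, ¬ TransGen r a a)
    (hqp : ¬ TransGen r q p) (a : α) :
    ¬ TransGen (fun x y => r x y ∨ (x = p ∧ y = q)) a a := by
  intro h
  rcases transGen_or_eq_pair h with h | ⟨h₁, h₂⟩
  · exact hr a h
  · rcases reflTransGen_iff_eq_or_transGen.1 (h₂.trans h₁) with h | h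
    exacts [hpq h, hqp h]

section Map

variable {π : α → β} {u v : α}

theorem not_map_transGen_self (hπ : ∀ a b, π a = π b → a = b ∨ s(a, b) = s(u, v))
    (hr : ∀ a, ¬ TransGen r a a) (huv : ¬ TransGen r u v)
    (hvu : ¬ TransGen r v u) (x : β) : ¬ Relation.Map (TransGen r) π π x x := by
  rintro ⟨a, b, hab, hba, rfl⟩
  rcases hπ a b hba with rfl | h
  · exact hr a hab
  · rcases Sym2.eq_iff.1 h with ⟨rfl, rfl⟩ | ⟨rfl, rfl⟩
    exacts [huv hab, hvu hab]

theorem map_transGen_trans_or_eq (hπ : ∀ a b, π a = π b → a = b ∨ s(a, b) = s(u, v))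
    {x y z : β} (hxy : Relation.Map (TransGen r) π π x y)
    (hyz : Relation.Map (TransGen r) π π y z) :
    Relation.Map (TransGen r) π π x z ∨ y = π u := by
  obtain ⟨a, b, hab, rfl, rfl⟩ := hxy
  obtain ⟨b', c, hbc, hb', rfl⟩ := hyz
  rcases hπ b' b hb' with rfl | h
  · exact .inl ⟨a, c, hab.trans hbc, rfl, rfl⟩
  · rcases Sym2.eq_iff.1 h with ⟨rfl, rfl⟩ | ⟨rfl, rfl⟩
    exacts [.inr hb'.symm, .inr rfl]

theorem not_transGen_map_self (hπ : ∀ a b, π a = π b → a = b ∨ s(a, b) = s(u, v))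
    (hr : ∀ a, ¬ TransGen r a a) (huv : ¬ TransGen r u v)
    (hvu : ¬ TransGen r v u) (x : β) : ¬ TransGen (Relation.Map r π π) x x := by
  set L := Relation.Map (TransGen r) π π
  have L_irrefl := not_map_transGen_self hπ hr huv hvu
  have L_trans {x y z : β} (hxy : L x y) (hyz : L y z) := map_transGen_trans_or_eq hπ hxy hyz
  -- A path lifts to at most two `r`-paths, glued at `π u`: a second gluing would need a lift
  -- from `π u` to itself.
  have lift {y z} (h : TransGen (Relation.Map r π π) y z) :
      L y z ∨ (L y (π u) ∧ L (π u) z) := by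
    induction h with
    | single h =>
      obtain ⟨a, b, hab, rfl, rfl⟩ := h
      exact .inl ⟨a, b, .single hab, rfl, rfl⟩
    | tail _ h ih =>
      obtain ⟨a, b, hab, rfl, rfl⟩ := h
      have hstep : L (π a) (π b) := ⟨a, b, .single hab, rfl, rfl⟩
      rcases ih with ih | ⟨ih₁, ih₂⟩
      · rcases L_trans ih hstep with h | h
        · exact .inl h
        · exact .inr ⟨h ▸ ih, h ▸ hstep⟩
      · rcases L_trans ih₂ hstep with h | h
        · exact .inr ⟨ih₁, h⟩
        · exact absurd (h ▸ ih₂) (L_irrefl _)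
  intro h
  rcases lift h with h | ⟨h₁, h₂⟩
  · exact L_irrefl x h
  · rcases L_trans h₂ h₁ with h | h
    · exact L_irrefl _ h
    · exact L_irrefl _ (h ▸ h₁)

end Map

end Relation

namespace SimpleGraph

section Orientation

variable {V : Type*} {G : SimpleGraph V} {r τ : V → V → Prop} {u v : V}

/-- `acyclicOrientationCount` counts these; its `Xor'` is equivalent to `∨` for acyclic `r`. -/
structure IsAcyclicOrientation (G : SimpleGraph V) (r : V → V → Prop) : Prop where
  adj : ∀ a b, r a b → G.Adj a b
  total : ∀ a b, G.Adj a b → r a b ∨ r b a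
  acyclic : ∀ a, ¬ TransGen r a a

theorem IsAcyclicOrientation.not_and (hr : G.IsAcyclicOrientation r) (a b : V) :
    ¬ (r a b ∧ r b a) :=
  fun h => hr.acyclic a ((TransGen.single h.1).tail h.2)

theorem IsAcyclicOrientation.deleteEdge (hr : G.IsAcyclicOrientation r) :
    (G.deleteEdges {s(u, v)}).IsAcyclicOrientation fun a b => r a b ∧ s(a, b) ≠ s(u, v) where
  adj a b h := deleteEdges_adj.2 ⟨hr.adj a b h.1, h.2⟩
  total a b hab := by
    obtain ⟨hab, he⟩ := deleteEdges_adj.1 hab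
    rw [Set.mem_singleton_iff] at he
    rcases hr.total a b hab with h | h
    exacts [.inl ⟨h, he⟩, .inr ⟨h, Sym2.eq_swap ▸ he⟩]
  acyclic a h := hr.acyclic a (TransGen.mono (fun _ _ h => h.1) _ _ h)

theorem IsAcyclicOrientation.insertEdge (h : G.Adj u v)
    (hτ : (G.deleteEdges {s(u, v)}).IsAcyclicOrientation τ) (hvu : ¬ TransGen τ v u) :
    G.IsAcyclicOrientation fun a b => τ a b ∨ (a = u ∧ b = v) where
  adj a b := by
    rintro (hab | ⟨rfl, rfl⟩)
    exacts [deleteEdges_le _ (hτ.adj a b hab), h]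
  total a b hab := by
    by_cases he : s(a, b) = s(u, v)
    · rcases Sym2.eq_iff.1 he with ⟨rfl, rfl⟩ | ⟨rfl, rfl⟩
      exacts [.inl (.inr ⟨rfl, rfl⟩), .inr (.inr ⟨rfl, rfl⟩)]
    · rcases hτ.total a b (deleteEdges_adj.2 ⟨hab, he⟩) with h | h
      exacts [.inl (.inl h), .inr (.inl h)]
  acyclic := not_transGen_or_eq_pair_self h.ne hτ.acyclic hvu

def acyclicOrientationDeleteEdgeEquiv (h : G.Adj u v) :
    {r // G.IsAcyclicOrientation r ∧ r u v} ≃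
      {τ // (G.deleteEdges {s(u, v)}).IsAcyclicOrientation τ ∧ ¬ TransGen τ v u} where
  toFun r := ⟨fun a b => r.1 a b ∧ s(a, b) ≠ s(u, v), r.2.1.deleteEdge,
    fun hvu => r.2.1.acyclic u (.head r.2.2 (TransGen.mono (fun _ _ h => h.1) _ _ hvu))⟩
  invFun τ :=
    ⟨fun a b => τ.1 a b ∨ (a = u ∧ b = v), τ.2.1.insertEdge h τ.2.2, .inr ⟨rfl, rfl⟩⟩
  left_inv r := by
    ext a b
    refine ⟨by rintro (h | ⟨rfl, rfl⟩); exacts [h.1, r.2.2], fun hab => ?_⟩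
    by_cases he : s(a, b) = s(u, v)
    · rcases Sym2.eq_iff.1 he with ⟨rfl, rfl⟩ | ⟨rfl, rfl⟩
      exacts [.inr ⟨rfl, rfl⟩, absurd ⟨r.2.2, hab⟩ (r.2.1.not_and _ _)]
    · exact .inl ⟨hab, he⟩
  right_inv τ := by
    ext a b
    refine ⟨by rintro ⟨h | ⟨rfl, rfl⟩, he⟩; exacts [h, absurd rfl he],
      fun hab => ⟨.inl hab, ?_⟩⟩
    simpa using (deleteEdges_adj.1 (τ.2.1.adj a b hab)).2

end Orientation

section Contraction

variable {V : Type*} [DecidableEq V] {G : SimpleGraph V} {u v : V} {α : Type*}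

def mergeVertex (h : u ≠ v) (w : V) : {w : V // w ≠ v} :=
  if hw : w = v then ⟨u, h⟩ else ⟨w, hw⟩

section mergeVertex

variable (h : u ≠ v)

@[simp] theorem mergeVertex_val (x : {w : V // w ≠ v}) : mergeVertex h x = x := dif_neg x.2

@[simp] theorem mergeVertex_right : mergeVertex h v = ⟨u, h⟩ := dif_pos rfl

@[simp] theorem mergeVertex_left : mergeVertex h u = ⟨u, h⟩ := dif_neg h

theorem eq_or_eq_of_mergeVertex_eq {a b : V} (hab : mergeVertex h a = mergeVertex h b) :
    a = b ∨ s(a, b) = s(u, v) := by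
  unfold mergeVertex at hab
  split_ifs at hab with ha hb hb <;> simp only [Subtype.mk.injEq] at hab <;> subst_vars <;> simp

theorem apply_mergeVertex {f : V → α} (hf : f u = f v) (a : V) : f (mergeVertex h a) = f a := by
  unfold mergeVertex
  split_ifs with ha
  exacts [ha ▸ hf, rfl]

end mergeVertex

/-- The edge `uv` is mapped to a loop, which `fromRel` discards. -/
def contractEdge (G : SimpleGraph V) (h : u ≠ v) : SimpleGraph {w : V // w ≠ v} :=
  fromRel (Relation.Map G.Adj (mergeVertex h) (mergeVertex h))

theorem contractEdge_adj_mergeVertex (h : u ≠ v) {a b : V}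
    (hab : (G.deleteEdges {s(u, v)}).Adj a b) :
    (G.contractEdge h).Adj (mergeVertex h a) (mergeVertex h b) := by
  obtain ⟨hab, he⟩ := deleteEdges_adj.1 hab
  refine ⟨fun heq => ?_, .inl ⟨a, b, hab, rfl, rfl⟩⟩
  rcases eq_or_eq_of_mergeVertex_eq h heq with rfl | h
  exacts [hab.ne rfl, he h]

theorem exists_deleteEdges_adj_of_contractEdge_adj (h : u ≠ v) {x y : {w : V // w ≠ v}}
    (hxy : (G.contractEdge h).Adj x y) :
    ∃ a b, (G.deleteEdges {s(u, v)}).Adj a b ∧ mergeVertex h a = x ∧ mergeVertex h b = y := by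
  obtain ⟨hne, ⟨a, b, hab, rfl, rfl⟩ | ⟨b, a, hba, rfl, rfl⟩⟩ := hxy
  on_goal 2 => have hab := hba.symm
  all_goals
    refine ⟨a, b, deleteEdges_adj.2 ⟨hab, fun he => hne ?_⟩, rfl, rfl⟩
    rcases Sym2.eq_iff.1 he with ⟨rfl, rfl⟩ | ⟨rfl, rfl⟩ <;> simp

theorem IsAcyclicOrientation.map_mergeVertex (h : u ≠ v) {τ : V → V → Prop}
    (hτ : (G.deleteEdges {s(u, v)}).IsAcyclicOrientation τ) (huv : ¬ TransGen τ u v)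
    (hvu : ¬ TransGen τ v u) :
    (G.contractEdge h).IsAcyclicOrientation (Relation.Map τ (mergeVertex h) (mergeVertex h)) where
  adj := by
    rintro _ _ ⟨a, b, hab, rfl, rfl⟩
    exact contractEdge_adj_mergeVertex h (hτ.adj a b hab)
  total x y hxy := by
    obtain ⟨a, b, hab, rfl, rfl⟩ := exists_deleteEdges_adj_of_contractEdge_adj h hxy
    rcases hτ.total a b hab with hab | hba
    exacts [.inl ⟨a, b, hab, rfl, rfl⟩, .inr ⟨b, a, hba, rfl, rfl⟩]
  acyclic :=
    not_transGen_map_self (fun _ _ => eq_or_eq_of_mergeVertex_eq h) hτ.acyclic huv hvu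

theorem IsAcyclicOrientation.comap_mergeVertex (h : u ≠ v)
    {σ : {w // w ≠ v} → {w // w ≠ v} → Prop}
    (hσ : (G.contractEdge h).IsAcyclicOrientation σ) :
    let τ a b := (G.deleteEdges {s(u, v)}).Adj a b ∧ σ (mergeVertex h a) (mergeVertex h b)
    (G.deleteEdges {s(u, v)}).IsAcyclicOrientation τ ∧
      ¬ TransGen τ u v ∧ ¬ TransGen τ v u := by
  intro τ
  have lift {a b} (hab : TransGen τ a b) : TransGen σ (mergeVertex h a) (mergeVertex h b) :=
    TransGen.lift (mergeVertex h) (fun _ _ hab => hab.2) _ _ hab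
  refine ⟨⟨fun a b hab => hab.1, fun a b hab => ?_, fun a ha => hσ.acyclic _ (lift ha)⟩,
    fun huv => hσ.acyclic ⟨u, h⟩ (by simpa using lift huv),
    fun hvu => hσ.acyclic ⟨u, h⟩ (by simpa using lift hvu)⟩
  rcases hσ.total _ _ (contractEdge_adj_mergeVertex h hab) with hσab | hσba
  exacts [.inl ⟨hab, hσab⟩, .inr ⟨hab.symm, hσba⟩]

def acyclicOrientationContractEdgeEquiv (h : u ≠ v) :
    {τ // (G.deleteEdges {s(u, v)}).IsAcyclicOrientation τ ∧
        ¬ TransGen τ u v ∧ ¬ TransGen τ v u} ≃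
      {σ // (G.contractEdge h).IsAcyclicOrientation σ} where
  toFun τ := ⟨Relation.Map τ.1 (mergeVertex h) (mergeVertex h),
    τ.2.1.map_mergeVertex h τ.2.2.1 τ.2.2.2⟩
  invFun σ := ⟨_, σ.2.comap_mergeVertex h⟩
  left_inv τ := by
    ext a b
    refine ⟨fun ⟨hab, hmap⟩ => ?_, fun hab => ⟨τ.2.1.adj a b hab, a, b, hab, rfl, rfl⟩⟩
    refine (τ.2.1.total a b hab).resolve_right fun hba => ?_
    exact (τ.2.1.map_mergeVertex h τ.2.2.1 τ.2.2.2).not_and _ _ ⟨hmap, b, a, hba, rfl, rfl⟩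
  right_inv σ := by
    ext x y
    refine ⟨by rintro ⟨a, b, ⟨-, hab⟩, rfl, rfl⟩; exact hab, fun hxy => ?_⟩
    obtain ⟨a, b, hab, rfl, rfl⟩ :=
      exists_deleteEdges_adj_of_contractEdge_adj h (σ.2.adj x y hxy)
    exact ⟨a, b, ⟨hab, hxy⟩, rfl, rfl⟩

def coloringDeleteEdgeEquiv (h : G.Adj u v) :
    {C : (G.deleteEdges {s(u, v)}).Coloring α // ¬ C u = C v} ≃ G.Coloring α where
  toFun C := Coloring.mk C.1 fun {a b} hab => by
    by_cases he : s(a, b) = s(u, v)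
    · rcases Sym2.eq_iff.1 he with ⟨rfl, rfl⟩ | ⟨rfl, rfl⟩
      exacts [C.2, Ne.symm C.2]
    · exact C.1.valid (deleteEdges_adj.2 ⟨hab, he⟩)
  invFun C := ⟨Coloring.mk C fun hab => C.valid (deleteEdges_le _ hab), C.valid h⟩
  left_inv _ := rfl
  right_inv _ := rfl

def coloringContractEdgeEquiv (h : u ≠ v) :
    {C : (G.deleteEdges {s(u, v)}).Coloring α // C u = C v} ≃
      (G.contractEdge h).Coloring α where
  toFun C := Coloring.mk (fun x => C.1 x) fun {x y} hxy => by
    obtain ⟨a, b, hab, rfl, rfl⟩ := exists_deleteEdges_adj_of_contractEdge_adj h hxy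
    rw [apply_mergeVertex h C.2, apply_mergeVertex h C.2]
    exact C.1.valid hab
  invFun c := ⟨Coloring.mk (fun a => c (mergeVertex h a))
    fun hab => c.valid (contractEdge_adj_mergeVertex h hab),
    show c (mergeVertex h u) = c (mergeVertex h v) by simp⟩
  left_inv C := Subtype.ext <| RelHom.ext <| apply_mergeVertex h C.2
  right_inv c := RelHom.ext fun x => show c (mergeVertex h x) = c x by simp

theorem card_coloring_deleteEdges [Finite V] [Finite α] (h : G.Adj u v) :
    Nat.card ((G.deleteEdges {s(u, v)}).Coloring α) =
      Nat.card (G.Coloring α) + Nat.card ((G.contractEdge h.ne).Coloring α) := by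
  classical
  rw [← Nat.card_congr <|
      Equiv.sumCompl fun C : (G.deleteEdges {s(u, v)}).Coloring α => C u = C v,
    Nat.card_sum, add_comm, Nat.card_congr (coloringDeleteEdgeEquiv h),
    Nat.card_congr (coloringContractEdgeEquiv h.ne)]

end Contraction

section ChromaticPolynomial

variable {V : Type}

theorem acyclicOrientationCount_eq (G : SimpleGraph V) :
    acyclicOrientationCount G = Nat.card {r // G.IsAcyclicOrientation r} := by
  refine Nat.card_congr <| Equiv.subtypeEquivRight fun r =>
    ⟨fun ⟨h₁, h₂, h₃⟩ => ⟨h₁, ?_, h₃⟩,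
      fun hr => ⟨hr.adj, fun a b hab => ?_, hr.acyclic⟩⟩
  · intro a b hab
    rcases h₂ a b hab with ⟨h, -⟩ | ⟨h, -⟩
    exacts [.inl h, .inr h]
  · rcases hr.total a b hab with h | h
    exacts [.inl ⟨h, fun h' => hr.not_and a b ⟨h, h'⟩⟩,
      .inr ⟨h, fun h' => hr.not_and a b ⟨h', h⟩⟩]

theorem acyclicOrientationCount_bot : acyclicOrientationCount (⊥ : SimpleGraph V) = 1 := by
  rw [acyclicOrientationCount_eq, Nat.card_eq_one_iff_unique]
  refine ⟨⟨fun r s => Subtype.ext ?_⟩, ⟨⟨fun _ _ => False, fun _ _ => False.elim,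
    fun _ _ => False.elim, fun a h => ?_⟩⟩⟩
  · ext a b
    exact iff_of_false (r.2.adj a b ·) (s.2.adj a b ·)
  · obtain ⟨_, h, -⟩ := TransGen.head'_iff.1 h
    exact h

theorem acyclicOrientationCount_eq_deleteEdges_add_contractEdge [Finite V] [DecidableEq V]
    {G : SimpleGraph V} {u v : V} (h : G.Adj u v) :
    acyclicOrientationCount G = acyclicOrientationCount (G.deleteEdges {s(u, v)}) +
      acyclicOrientationCount (G.contractEdge h.ne) := by
  -- Deleting `uv` from an orientation of `G` leaves one of `G - uv` in which the head of `uv`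
  -- does not reach its tail; those in which neither endpoint reaches the other arise twice,
  -- and they are the orientations of `G / uv`.
  set Gd := G.deleteEdges {s(u, v)}
  have reverse : Nat.card {r // G.IsAcyclicOrientation r ∧ ¬ r u v} =
      Nat.card {r // G.IsAcyclicOrientation r ∧ r v u} :=
    Nat.card_congr <| Equiv.subtypeEquivRight fun r =>
      ⟨fun hr => ⟨hr.1, (hr.1.total u v h).resolve_left hr.2⟩,
        fun hr => ⟨hr.1, fun huv => hr.1.not_and _ _ ⟨huv, hr.2⟩⟩⟩
  have delete_vu : Nat.card {r // G.IsAcyclicOrientation r ∧ r v u} =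
      Nat.card {τ // Gd.IsAcyclicOrientation τ ∧ ¬ TransGen τ u v} := by
    rw [Nat.card_congr (acyclicOrientationDeleteEdgeEquiv h.symm), Sym2.eq_swap]
  have reach_uv :
      Nat.card {τ // (Gd.IsAcyclicOrientation τ ∧ ¬ TransGen τ v u) ∧ TransGen τ u v} =
        Nat.card {τ // Gd.IsAcyclicOrientation τ ∧ TransGen τ u v} :=
    Nat.card_congr <| Equiv.subtypeEquivRight fun τ =>
      ⟨fun hτ => ⟨hτ.1.1, hτ.2⟩,
        fun hτ => ⟨⟨hτ.1, fun hvu => hτ.1.acyclic u (hτ.2.trans hvu)⟩, hτ.2⟩⟩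
  have unreach : Nat.card {τ // (Gd.IsAcyclicOrientation τ ∧ ¬ TransGen τ v u) ∧
        ¬ TransGen τ u v} = acyclicOrientationCount (G.contractEdge h.ne) := by
    rw [acyclicOrientationCount_eq, ← Nat.card_congr (acyclicOrientationContractEdgeEquiv h.ne)]
    exact Nat.card_congr <| Equiv.subtypeEquivRight fun τ => by tauto
  rw [acyclicOrientationCount_eq, acyclicOrientationCount_eq,
    ← Nat.card_subtype_and_add_card_subtype_and_not _ fun r => r u v, reverse, delete_vu,
    Nat.card_congr (acyclicOrientationDeleteEdgeEquiv h),
    ← Nat.card_subtype_and_add_card_subtype_and_not _ fun τ => TransGen τ u v,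
    reach_uv, unreach,
    ← Nat.card_subtype_and_add_card_subtype_and_not (Gd.IsAcyclicOrientation ·)
      fun τ => TransGen τ u v]
  ring

def coloringBotEquiv (α : Type*) : (⊥ : SimpleGraph V).Coloring α ≃ (V → α) where
  toFun C := C
  invFun f := Coloring.mk f fun h => h.elim
  left_inv _ := rfl
  right_inv _ := rfl

/-- `p` is the chromatic polynomial of `G`; its value at `-1` is Stanley's theorem. -/
theorem exists_chromaticPolynomial [Finite V] (G : SimpleGraph V) :
    ∃ p : ℤ[X], (∀ d : ℕ, p.eval (d : ℤ) = Nat.card (G.Coloring (Fin d))) ∧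
      p.eval (-1) = (-1) ^ Nat.card V * acyclicOrientationCount G := by
  induction hn : Nat.card V using Nat.strong_induction_on generalizing V with | _ n ihn => ?_
  classical
  induction G using WellFoundedLT.induction with | _ G ihG => ?_
  obtain rfl | hG := eq_or_ne G ⊥
  · refine ⟨X ^ n, fun d => ?_, ?_⟩
    · simp [Nat.card_congr (coloringBotEquiv _), Nat.card_fun, hn]
    · simp [acyclicOrientationCount_bot]
  obtain ⟨u, v, h⟩ := ne_bot_iff_exists_adj.1 hG
  obtain ⟨m, rfl⟩ : ∃ m, n = m + 1 :=
    Nat.exists_eq_add_one.2 (hn ▸ Nat.card_pos_iff.2 ⟨⟨u⟩, inferInstance⟩)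
  have hdel : G.deleteEdges {s(u, v)} < G := (deleteEdges_le _).lt_of_ne fun heq => by
    rw [← heq] at h
    simp at h
  have hcard : Nat.card {w // w ≠ v} = m := by
    have := Nat.card_congr (Equiv.optionSubtypeNe v)
    rw [Finite.card_option, hn] at this
    omega
  obtain ⟨p, hp_col, hp_neg⟩ := ihG _ hdel
  obtain ⟨q, hq_col, hq_neg⟩ := ihn m (by omega) (G.contractEdge h.ne) hcard
  refine ⟨p - q, fun d => ?_, ?_⟩
  · rw [eval_sub, hp_col, hq_col, card_coloring_deleteEdges h]
    push_cast
    ring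
  · rw [eval_sub, hp_neg, hq_neg, acyclicOrientationCount_eq_deleteEdges_add_contractEdge h]
    push_cast
    ring

end ChromaticPolynomial

section Components

variable {V : Type*} {G H : SimpleGraph V}

theorem apply_eq_of_reachable {β : Type*} {g : V → β}
    (hg : ∀ a b, H.Adj a b → g a = g b) {a b : V} (hab : H.Reachable a b) : g a = g b := by
  rw [reachable_iff_reflTransGen] at hab
  induction hab with
  | refl => rfl
  | tail _ h ih => exact ih.trans (hg _ _ h)

theorem reachable_of_forall_adj_reachable (h : ∀ a b, H.Adj a b → G.Reachable a b) {a b : V}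
    (hab : H.Reachable a b) : G.Reachable a b := by
  rw [reachable_iff_reflTransGen] at hab ⊢
  exact ReflTransGen.lift' id
    (fun a b hab => (reachable_iff_reflTransGen a b).1 (h a b hab)) _ _ hab

theorem reachable_induce_iff {s : Set V} (hs : ∀ a b, H.Adj a b → a ∈ s → b ∈ s)
    (x y : s) :
    (H.induce s).Reachable x y ↔ H.Reachable x y := by
  classical
  refine ⟨fun h => h.map (Embedding.induce s).toHom, fun ⟨w⟩ => ?_⟩
  have closed {a b : V} (hab : H.Reachable a b) (ha : a ∈ s) : b ∈ s := by
    rw [reachable_iff_reflTransGen] at hab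
    induction hab with
    | refl => exact ha
    | tail _ hbc ih => exact hs _ _ hbc ih
  exact ⟨w.induce s fun z hz => closed ⟨w.takeUntil z hz⟩ x.2⟩

end Components

section Flats

variable {V : Type} {G H F : SimpleGraph V} {α : Type*}

theorem sum_inducedRank_fibers [Fintype V] {ι : Type*} [Fintype ι] (g : V → ι)
    (hg : ∀ a b, H.Adj a b → g a = g b) :
    ∑ i, inducedRank H (g ⁻¹' {i}) = flatRank H := by
  set g' : H.ConnectedComponent → ι :=
    ConnectedComponent.lift g fun _ _ p _ => apply_eq_of_reachable hg ⟨p⟩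
  have components (i : ι) : Nat.card (H.induce (g ⁻¹' {i})).ConnectedComponent =
      Nat.card {c // g' c = i} :=
    (Nat.card_congr (Equiv.subtypeQuotientEquivQuotientSubtype (fun a => g a = i)
      (s₁ := H.reachableSetoid) (s₂ := (H.induce (g ⁻¹' {i})).reachableSetoid)
      (fun c => g' c = i) (fun _ => Iff.rfl)
      (reachable_induce_iff fun a b hab (ha : g a = i) =>
        ((hg a b hab).symm.trans ha : g b = i)))).symm
  have hV := Nat.card_congr (Equiv.sigmaFiberEquiv g)
  have hC := Nat.card_congr (Equiv.sigmaFiberEquiv g')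
  rw [Nat.card_sigma] at hV hC
  rw [flatRank, Fintype.card_eq_nat_card, ← hV, ← hC, ← Finset.sum_tsub_distrib _ fun i _ =>
    components i ▸ Nat.card_le_card_of_surjective _ fun c => c.exists_rep]
  exact Finset.sum_congr rfl fun i _ => by rw [← components]; rfl

def monochromatic (G : SimpleGraph V) (f : V → α) : SimpleGraph V where
  Adj a b := G.Adj a b ∧ f a = f b
  symm := ⟨fun _ _ h => ⟨h.1.symm, h.2.symm⟩⟩
  loopless := ⟨fun _ h => G.irrefl h.1⟩

theorem monochromatic_adj {f : V → α} {a b : V} :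
    (G.monochromatic f).Adj a b ↔ G.Adj a b ∧ f a = f b := .rfl

theorem monochromatic_le (f : V → α) : G.monochromatic f ≤ G := fun _ _ h => h.1

/-- The smallest flat of `G` containing `H` (for `H ≤ G`). -/
def flatClosure (G H : SimpleGraph V) : SimpleGraph V where
  Adj a b := G.Adj a b ∧ H.Reachable a b
  symm := ⟨fun _ _ h => ⟨h.1.symm, h.2.symm⟩⟩
  loopless := ⟨fun _ h => G.irrefl h.1⟩

theorem flatClosure_adj {a b : V} : (flatClosure G H).Adj a b ↔ G.Adj a b ∧ H.Reachable a b :=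
  .rfl

theorem reachable_flatClosure_iff (hH : H ≤ G) {a b : V} :
    (flatClosure G H).Reachable a b ↔ H.Reachable a b :=
  ⟨reachable_of_forall_adj_reachable fun _ _ h => (flatClosure_adj.1 h).2,
    fun h => h.mono fun _ _ h => flatClosure_adj.2 ⟨hH h, h.reachable⟩⟩

theorem isFlatOf_flatClosure (hH : H ≤ G) : IsFlatOf G (flatClosure G H) :=
  ⟨fun _ _ h => (flatClosure_adj.1 h).1,
    fun _ _ hab h => flatClosure_adj.2 ⟨hab, (reachable_flatClosure_iff hH).1 h⟩⟩

theorem flatRank_flatClosure [Fintype V] (hH : H ≤ G) :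
    flatRank (flatClosure G H) = flatRank H := by
  have : Nat.card (flatClosure G H).ConnectedComponent = Nat.card H.ConnectedComponent :=
    Nat.card_congr (Quot.congr (Equiv.refl V) fun _ _ => reachable_flatClosure_iff hH)
  rw [flatRank, flatRank, this]

theorem sum_inducedRank_preimage [Fintype V] {d : ℕ} (f : V → Fin d) :
    ∑ i, inducedRank G (f ⁻¹' {i}) = flatRank (G.monochromatic f) := by
  rw [← sum_inducedRank_fibers f fun _ _ h => (monochromatic_adj.1 h).2]
  refine Finset.sum_congr rfl fun i _ => ?_
  have : G.induce (f ⁻¹' {i}) = (G.monochromatic f).induce (f ⁻¹' {i}) := by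
    ext ⟨a, ha⟩ ⟨b, hb⟩
    exact ⟨fun h => ⟨h, (ha : f a = i).trans (hb : f b = i).symm⟩, fun h => h.1⟩
  rw [inducedRank, inducedRank, this]

def monochromaticFlatEquiv (hF : IsFlatOf G F) :
    {f : V → α // flatClosure G (G.monochromatic f) = F} ≃ (contractFlat G F).Coloring α where
  toFun f := by
    have hconst {a b} (hab : F.Reachable a b) : f.1 a = f.1 b := by
      rw [← f.2, reachable_flatClosure_iff (monochromatic_le f.1)] at hab
      exact apply_eq_of_reachable (fun _ _ h => (monochromatic_adj.1 h).2) hab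
    refine Coloring.mk (ConnectedComponent.lift f.1 fun a b p _ => hconst ⟨p⟩) ?_
    rintro _ _ ⟨hne, a, b, hab, rfl, rfl⟩ heq
    have hF : F.Adj a b := f.2 ▸ flatClosure_adj.2 ⟨hab, Adj.reachable ⟨hab, heq⟩⟩
    exact hne (ConnectedComponent.sound hF.reachable)
  invFun c := ⟨fun a => c (F.connectedComponentMk a), by
    ext a b
    refine ⟨fun ⟨hab, hr⟩ => hF.2 a b hab (reachable_of_forall_adj_reachable ?_ hr),
      fun hab => ⟨hF.1 hab, Adj.reachable
        ⟨hF.1 hab, congrArg c (ConnectedComponent.sound hab.reachable)⟩⟩⟩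
    rintro x y ⟨hxy, heq⟩
    by_contra hn
    exact c.valid ⟨fun h => hn (ConnectedComponent.exact h), x, y, hxy, rfl, rfl⟩ heq⟩
  left_inv _ := rfl
  right_inv c := RelHom.ext fun C => by
    induction C using ConnectedComponent.ind
    rfl

theorem flatRank_add_card_connectedComponent [Fintype V] (H : SimpleGraph V) :
    flatRank H + Nat.card H.ConnectedComponent = Fintype.card V :=
  Nat.sub_add_cancel <| Fintype.card_eq_nat_card (α := V) ▸
    Nat.card_le_card_of_surjective _ fun c => c.exists_rep

end Flats

end SimpleGraph

open Classical Finset SimpleGraph in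
theorem chromQ_eq_sum_flats {V : Type} [Fintype V] [DecidableEq V] (G : SimpleGraph V) (d : ℕ) :
    chromQ G d = ∑ F ∈ {F | IsFlatOf G F}.toFinset,
      (Nat.card ((contractFlat G F).Coloring (Fin d)) : ℤ[X]) * X ^ flatRank F := by
  have hflat (f : V → Fin d) :
      G.flatClosure (G.monochromatic f) ∈ {F | IsFlatOf G F}.toFinset :=
    Set.mem_toFinset.2 (G.isFlatOf_flatClosure (G.monochromatic_le f))
  rw [chromQ, ← sum_fiberwise_of_maps_to fun f _ => hflat f]
  refine sum_congr rfl fun F hF => ?_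
  replace hF : IsFlatOf G F := by simpa using hF
  calc ∑ f with G.flatClosure (G.monochromatic f) = F,
        (X : ℤ[X]) ^ ∑ i, inducedRank G (f ⁻¹' {i})
      = ∑ f with G.flatClosure (G.monochromatic f) = F, X ^ flatRank F :=
        sum_congr rfl fun f hf => by
          rw [G.sum_inducedRank_preimage, ← G.flatRank_flatClosure (G.monochromatic_le f),
            (mem_filter.1 hf).2]
    _ = _ := by
      rw [sum_const, nsmul_eq_mul, ← Fintype.card_subtype, ← Nat.card_eq_fintype_card,
        Nat.card_congr (G.monochromaticFlatEquiv hF)]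

/-- `(-1)^|V| χ_{-q}(Γ,-1) = ∑_{F flat} a(Γ/F) q^{rk F}`. -/
theorem chromQ_specialization_eq_sum_flats
    {V : Type} [Fintype V] [DecidableEq V] (n : ℕ)
    (G : SimpleGraph V) (hV : Fintype.card V = n)
    (P : Polynomial (Polynomial ℤ))
    (hP : ∀ d : ℕ, P.eval ((d : ℕ) : Polynomial ℤ) = chromQ G d) :
    (-1 : Polynomial ℤ) ^ n * (P.eval (-1 : Polynomial ℤ)).comp (-X)
      = ∑ᶠ H ∈ {H : SimpleGraph V | IsFlatOf G H},
          (acyclicOrientationCount (contractFlat G H) : Polynomial ℤ) * X ^ flatRank H := by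
  classical
  choose p hp_col hp_neg using fun F : SimpleGraph V =>
    (contractFlat G F).exists_chromaticPolynomial
  have hPQ : P = ∑ F ∈ {F | IsFlatOf G F}.toFinset, C (X ^ flatRank F) * (p F).map C :=
    eq_of_eval_natCast_eq fun d => by
      simp [hP, chromQ_eq_sum_flats, eval_finsetSum, hp_col, mul_comm]
  rw [finsum_mem_eq_toFinset_sum, hPQ, eval_finsetSum, sum_comp, Finset.mul_sum]
  refine Finset.sum_congr rfl fun F _ => ?_
  have hmap : ((p F).map C).eval (-1) = C ((p F).eval (-1)) := by
    simpa using eval_intCast_map C (p F) (-1)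
  rw [eval_mul, eval_C, hmap, hp_neg, ← hV, ← F.flatRank_add_card_connectedComponent,
    neg_one_pow_mul_comp_neg_X]
end

section
/- For every finite simple graph Γ on vertex set V there exists a polynomial P in one variable t with coefficients in ℤ[q] such that for every natural number d, P evaluated at d equals χ_q(Γ,d) (i.e. the q-chromatic function d ↦ χ_q(Γ,d) is a polynomial function of d). -/
open Polynomial

/-!
Group the colourings `f : V → Fin d` by their kernel, the partition of `V` into nonempty colour
classes. The weight `q ^ Σ rk` of `f` only depends on this partition `P`, and the colourings with
kernel `P` are the injections of the parts of `P` into the `d` colours, of which there are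
`d (d - 1) ⋯ (d - #P + 1)`. Hence `χ_q(Γ, d) = Σ_P q ^ rk(P) · d (d - 1) ⋯ (d - #P + 1)`.
-/

open Finset

namespace Finpartition

variable {α β : Type*} [DecidableEq α]

theorem ext_part {s : Finset α} {P Q : Finpartition s} (h : ∀ a ∈ s, P.part a = Q.part a) :
    P = Q := by
  ext t
  constructor
  · intro ht
    obtain ⟨a, ha, rfl⟩ := P.part_surjOn ht
    simpa [h a ha] using ha
  · intro ht
    obtain ⟨a, ha, rfl⟩ := Q.part_surjOn ht
    simpa [← h a ha] using ha

variable [Fintype α] [DecidableEq β]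

def ker (f : α → β) : Finpartition (univ : Finset α) :=
  @ofSetoid _ _ _ (Setoid.ker f) fun a b => decEq (f a) (f b)

theorem mem_part_ker {f : α → β} {a b : α} : b ∈ (ker f).part a ↔ f a = f b :=
  mem_part_ofSetoid_iff_rel

theorem ker_eq_iff {f : α → β} {P : Finpartition (univ : Finset α)} :
    ker f = P ↔ ∀ a b, f a = f b ↔ P.part a = P.part b := by
  constructor
  · rintro rfl a b
    rw [← mem_part_ker, (ker f).mem_part_iff_part_eq_part (mem_univ _) (mem_univ _), eq_comm]
  · intro h
    refine ext_part fun a _ => ?_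
    ext b
    rw [mem_part_ker, h, P.mem_part_iff_part_eq_part (mem_univ _) (mem_univ _), eq_comm]

theorem ker_parts (f : α → β) :
    (ker f).parts = univ.image fun a => ({b | f a = f b} : Finset α) :=
  ofSetSetoid_parts ..

theorem sum_preimage_eq_sum_ker_parts {M : Type*} [AddCommMonoid M] [Fintype β] (f : α → β)
    {φ : Set α → M} (hφ : φ ∅ = 0) : ∑ i, φ (f ⁻¹' {i}) = ∑ t ∈ (ker f).parts, φ t := by
  let fiber (i : β) : Finset α := {a | f a = i}
  have coe_fiber (i : β) : (fiber i : Set α) = f ⁻¹' {i} := by ext; simp [fiber]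
  have fiber_injOn : Set.InjOn fiber (univ.image f) := by
    intro i hi j _ h
    obtain ⟨a, -, rfl⟩ := mem_image.1 hi
    simpa [fiber] using (Finset.ext_iff.1 h a).1 (by simp [fiber])
  calc ∑ i, φ (f ⁻¹' {i}) = ∑ i ∈ univ.image f, φ (fiber i) := by
        simp_rw [← coe_fiber]
        refine (sum_subset (subset_univ _) fun i _ hi => ?_).symm
        rw [coe_fiber, Set.preimage_singleton_eq_empty.2 (by simpa using hi), hφ]
    _ = ∑ t ∈ (univ.image f).image fiber, φ t :=
        (sum_image (f := fun t : Finset α => φ t) fiber_injOn).symm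
    _ = ∑ t ∈ (ker f).parts, φ t := by
        rw [ker_parts, image_image]
        simp only [fiber, Function.comp_def, eq_comm]

noncomputable def kerEquiv (P : Finpartition (univ : Finset α)) :
    {f : α → β // ker f = P} ≃ (P.parts ↪ β) := by
  refine (Equiv.ofBijective (fun g : P.parts ↪ β => (⟨fun a => g ⟨P.part a, by simp⟩,
    ker_eq_iff.2 fun a b => g.injective.eq_iff.trans Subtype.ext_iff⟩ : {f // ker f = P}))
    ⟨fun g h hgh => ?_, fun ⟨f, hf⟩ => ?_⟩).symm
  · ext ⟨t, ht⟩
    obtain ⟨a, -, rfl⟩ := P.part_surjOn ht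
    exact congrFun (congrArg Subtype.val hgh) a
  · have hrep (t : P.parts) : ∃ a, P.part a = t := by
      obtain ⟨a, -, ha⟩ := P.part_surjOn t.2
      exact ⟨a, ha⟩
    choose rep hrep using hrep
    have hfP := ker_eq_iff.1 hf
    refine ⟨⟨fun t => f (rep t), fun s t hst => Subtype.ext ?_⟩, Subtype.ext (funext fun a => ?_)⟩
    · rw [← hrep s, ← hrep t, ← hfP]
      exact hst
    · exact (hfP _ _).2 (hrep ⟨P.part a, by simp⟩)

theorem card_ker_eq [Fintype β] (P : Finpartition (univ : Finset α)) :
    #{f : α → β | ker f = P} = (Fintype.card β).descFactorial #P.parts := by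
  rw [← Fintype.card_subtype, Fintype.card_congr (kerEquiv P), Fintype.card_embedding_eq,
    Fintype.card_coe]

end Finpartition

open Finpartition in
theorem exists_polynomial_eval_eq_sum_ker {α R : Type*} [Fintype α] [DecidableEq α] [CommRing R]
    (φ : Finpartition (univ : Finset α) → R) :
    ∃ p : R[X], ∀ d : ℕ, p.eval (d : R) = ∑ f : α → Fin d, φ (ker f) := by
  refine ⟨∑ P, C (φ P) * descPochhammer R #P.parts, fun d => ?_⟩
  calc (∑ P, C (φ P) * descPochhammer R #P.parts).eval (d : R)
      = ∑ P, #{f : α → Fin d | ker f = P} • φ P := by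
        simp [eval_finsetSum, descPochhammer_eval_eq_descFactorial, card_ker_eq, mul_comm]
    _ = ∑ f : α → Fin d, φ (ker f) := by
        simp_rw [← sum_const]
        exact sum_fiberwise' _ _ _

theorem inducedRank_empty {V : Type} (G : SimpleGraph V) : inducedRank G ∅ = 0 := by
  simp [inducedRank]

/-- The `q`-chromatic function `d ↦ χ_q(Γ,d)` is a polynomial function of `d`. -/
theorem chromQ_isPolynomial
    {V : Type} [Fintype V] [DecidableEq V] (G : SimpleGraph V) :
    ∃ P : Polynomial (Polynomial ℤ),
      ∀ d : ℕ, P.eval ((d : ℕ) : Polynomial ℤ) = chromQ G d := by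
  obtain ⟨p, hp⟩ := exists_polynomial_eval_eq_sum_ker (R := ℤ[X])
    fun P : Finpartition (univ : Finset V) => (X : ℤ[X]) ^ ∑ t ∈ P.parts, inducedRank G t
  refine ⟨p, fun d => ?_⟩
  rw [hp, chromQ]
  simp_rw [Finpartition.sum_preimage_eq_sum_ker_parts _ (inducedRank_empty G)]
end

section
/- Let Γ be a connected finite simple graph on vertex set V. Then the number of vertices (0-dimensional faces, equivalently extreme points) of the graphical zonotope Z_Γ equals a(Γ), the number of acyclic orientations of Γ. -/
open Polynomial

/-!
A vertex of `Z_Γ` is the unique maximiser of a linear functional `x ↦ ℓ ⬝ᵥ x`. Writing a point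
of `Z_Γ` as `x_w = ∑_u c_{wu}` with `c` antisymmetric, supported on the edges and bounded by `1`,
one has `2 (ℓ ⬝ᵥ x) = ∑_{w,u} (ℓ_w - ℓ_u) c_{wu} ≤ ∑_{w ~ u} |ℓ_w - ℓ_u|`, with equality iff every
edge coefficient is the sign of `ℓ_w - ℓ_u`. If `ℓ` takes equal values at the ends of an edge,
the coefficient of that edge can be moved freely inside the face, which is then not a point;
otherwise the face is the point of the acyclic orientation `w → u ⇔ ℓ_u < ℓ_w`. Conversely, an
acyclic orientation arises in this way from `ℓ_v = #(descendants of v)`, and this `ℓ` also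
separates its point from the points of all other orientations.
-/

theorem finrank_direction_affineSpan_eq_zero_iff {k E : Type*} [DivisionRing k] [AddCommGroup E]
    [Module k E] [FiniteDimensional k E] {s : Set E} :
    Module.finrank k (affineSpan k s).direction = 0 ↔ s.Subsingleton := by
  rw [direction_affineSpan, Submodule.finrank_eq_zero, vectorSpan_eq_bot_iff_subsingleton]

theorem isExposed_iff_exists_dotProduct {V : Type} [Fintype V] [DecidableEq V]
    {A F : Set (V → ℝ)} :
    IsExposed ℝ A F ↔ (F.Nonempty → ∃ ℓ : V → ℝ, F = {x ∈ A | ∀ y ∈ A, ℓ ⬝ᵥ y ≤ ℓ ⬝ᵥ x}) := by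
  refine forall_congr' fun _ => ⟨fun ⟨l, hl⟩ => ?_, fun ⟨ℓ, hℓ⟩ => ?_⟩
  · obtain ⟨ℓ, hℓ⟩ : ∃ ℓ : V → ℝ, ∀ x, l x = ℓ ⬝ᵥ x := ⟨_, fun x => by
      rw [dotProduct_comm]
      exact LinearMap.pi_apply_eq_sum_univ l.toLinearMap x⟩
    exact ⟨ℓ, by simpa only [hℓ] using hl⟩
  · exact ⟨LinearMap.toContinuousLinearMap (dotProductBilin ℝ ℝ ℓ), hℓ⟩

theorem Relation.not_transGen_self_of_lt {α β : Type*} [Preorder β] {r : α → α → Prop}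
    {f : α → β} (hf : ∀ a b, r a b → f b < f a) (a : α) : ¬ Relation.TransGen r a a := by
  intro h
  have := Relation.TransGen.lift f (p := fun x y => y < x) hf a a h
  rw [Relation.transGen_eq_self] at this
  exact lt_irrefl _ this

namespace GraphicalZonotope

open Finset
open scoped Classical

variable {V : Type} {G : SimpleGraph V}

def IsEdgeCoef (G : SimpleGraph V) (c : V → V → ℝ) : Prop :=
  (∀ u v, c u v = - c v u) ∧ (∀ u v, ¬ G.Adj u v → c u v = 0) ∧ ∀ u v, |c u v| ≤ 1

def IsOrientation (G : SimpleGraph V) (r : V → V → Prop) : Prop :=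
  (∀ u v, r u v → G.Adj u v) ∧ ∀ u v, G.Adj u v → Xor (r u v) (r v u)

noncomputable def orientationCoef (r : V → V → Prop) : V → V → ℝ :=
  fun u v => if r u v then 1 else if r v u then -1 else 0

theorem orientationCoef_eq_one_iff {r : V → V → Prop} {u v : V} :
    orientationCoef r u v = 1 ↔ r u v := by
  unfold orientationCoef
  split_ifs <;> norm_num [*]

theorem orientationCoef_injective : Function.Injective (orientationCoef (V := V)) := by
  intro r r' h
  ext u v
  rw [← orientationCoef_eq_one_iff (r := r), h, orientationCoef_eq_one_iff]

theorem IsOrientation.isEdgeCoef {r : V → V → Prop} (hr : IsOrientation G r) :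
    IsEdgeCoef G (orientationCoef r) := by
  refine ⟨fun u v => ?_, fun u v huv => ?_, fun u v => ?_⟩
  · by_cases h : G.Adj u v
    · rcases hr.2 u v h with ⟨h1, h2⟩ | ⟨h1, h2⟩ <;> simp [orientationCoef, h1, h2]
    · have h1 : ¬ r u v := fun h' => h (hr.1 u v h')
      have h2 : ¬ r v u := fun h' => h (hr.1 v u h').symm
      simp [orientationCoef, h1, h2]
  · have h1 : ¬ r u v := fun h' => huv (hr.1 u v h')
    have h2 : ¬ r v u := fun h' => huv (hr.1 v u h').symm
    simp [orientationCoef, h1, h2]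
  · unfold orientationCoef
    split_ifs <;> norm_num

theorem IsEdgeCoef.mul_le {c : V → V → ℝ} (hc : IsEdgeCoef G c) (ℓ : V → ℝ) (w u : V) :
    (ℓ w - ℓ u) * c w u ≤ if G.Adj w u then |ℓ w - ℓ u| else 0 := by
  split_ifs with h
  · calc (ℓ w - ℓ u) * c w u ≤ |ℓ w - ℓ u| * |c w u| := (le_abs_self _).trans (abs_mul _ _).le
      _ ≤ |ℓ w - ℓ u| := mul_le_of_le_one_right (abs_nonneg _) (hc.2.2 w u)
  · rw [hc.2.1 w u h, mul_zero]

theorem IsOrientation.mul_orientationCoef {r : V → V → Prop} (hr : IsOrientation G r)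
    {ℓ : V → ℝ} (hℓ : ∀ u v, r u v → ℓ v ≤ ℓ u) (w u : V) :
    (ℓ w - ℓ u) * orientationCoef r w u = if G.Adj w u then |ℓ w - ℓ u| else 0 := by
  split_ifs with h
  · rcases hr.2 w u h with ⟨h1, h2⟩ | ⟨h1, h2⟩
    · simp [orientationCoef, h1, abs_of_nonneg (sub_nonneg.mpr (hℓ w u h1))]
    · simp [orientationCoef, h1, h2, abs_of_nonpos (sub_nonpos.mpr (hℓ u w h1))]
  · rw [hr.isEdgeCoef.2.1 w u h, mul_zero]

section Fintype

variable [Fintype V]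

def edgeSum (c : V → V → ℝ) : V → ℝ := fun w => ∑ u, c w u

theorem mem_graphicalZonotope [DecidableEq V] {x : V → ℝ} :
    x ∈ graphicalZonotope G ↔ ∃ c, IsEdgeCoef G c ∧ x = edgeSum c := by
  simp only [graphicalZonotope, IsEdgeCoef, Set.mem_ofPred_eq, and_assoc]
  rfl

theorem two_mul_dotProduct_edgeSum {c : V → V → ℝ} (hc : ∀ u v, c u v = - c v u)
    (ℓ : V → ℝ) : 2 * (ℓ ⬝ᵥ edgeSum c) = ∑ w, ∑ u, (ℓ w - ℓ u) * c w u := by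
  have hdot : ∑ w, ∑ u, ℓ w * c w u = ℓ ⬝ᵥ edgeSum c := by
    simp only [dotProduct, edgeSum, mul_sum]
  have hswap : ∑ w, ∑ u, ℓ u * c w u = -(ℓ ⬝ᵥ edgeSum c) :=
    calc ∑ w, ∑ u, ℓ u * c w u = ∑ u, ∑ w, ℓ u * c w u := sum_comm
      _ = ∑ u, ∑ w, -(ℓ u * c u w) :=
        sum_congr rfl fun u _ => sum_congr rfl fun w _ => by rw [hc w u]; ring
      _ = -(ℓ ⬝ᵥ edgeSum c) := by rw [← hdot]; simp
  simp only [sub_mul, sum_sub_distrib, hswap, hdot]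
  ring

/-- Twice the maximum of `x ↦ ℓ ⬝ᵥ x` on the graphical zonotope. -/
noncomputable def edgeVariation (G : SimpleGraph V) (ℓ : V → ℝ) : ℝ :=
  ∑ w, ∑ u, if G.Adj w u then |ℓ w - ℓ u| else 0

theorem IsEdgeCoef.two_mul_dotProduct_le {c : V → V → ℝ} (hc : IsEdgeCoef G c) (ℓ : V → ℝ) :
    2 * (ℓ ⬝ᵥ edgeSum c) ≤ edgeVariation G ℓ := by
  rw [two_mul_dotProduct_edgeSum hc.1]
  exact sum_le_sum fun w _ => sum_le_sum fun u _ => hc.mul_le ℓ w u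

theorem IsEdgeCoef.mul_eq_of_two_mul_dotProduct_eq {c : V → V → ℝ} (hc : IsEdgeCoef G c)
    {ℓ : V → ℝ} (h : 2 * (ℓ ⬝ᵥ edgeSum c) = edgeVariation G ℓ) (w u : V) :
    (ℓ w - ℓ u) * c w u = if G.Adj w u then |ℓ w - ℓ u| else 0 := by
  rw [two_mul_dotProduct_edgeSum hc.1, edgeVariation, ← sum_product', ← sum_product'] at h
  exact (sum_eq_sum_iff_of_le fun p _ => hc.mul_le ℓ p.1 p.2).mp h (w, u) (mem_univ _)

theorem IsOrientation.two_mul_dotProduct_eq {r : V → V → Prop} (hr : IsOrientation G r)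
    {ℓ : V → ℝ} (hℓ : ∀ u v, r u v → ℓ v ≤ ℓ u) :
    2 * (ℓ ⬝ᵥ edgeSum (orientationCoef r)) = edgeVariation G ℓ := by
  rw [two_mul_dotProduct_edgeSum hr.isEdgeCoef.1]
  exact sum_congr rfl fun w _ => sum_congr rfl fun u _ => hr.mul_orientationCoef hℓ w u

theorem IsOrientation.eq_orientationCoef {r : V → V → Prop} (hr : IsOrientation G r)
    {ℓ : V → ℝ} (hℓ : ∀ u v, r u v → ℓ v < ℓ u) {c : V → V → ℝ} (hc : IsEdgeCoef G c)
    (h : 2 * (ℓ ⬝ᵥ edgeSum c) = edgeVariation G ℓ) : c = orientationCoef r := by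
  ext w u
  by_cases hwu : G.Adj w u
  · have hne : ℓ w - ℓ u ≠ 0 := by
      rcases hr.2 w u hwu with ⟨h1, -⟩ | ⟨h1, -⟩
      · exact (sub_pos.mpr (hℓ w u h1)).ne'
      · exact (sub_neg.mpr (hℓ u w h1)).ne
    refine mul_left_cancel₀ hne ?_
    rw [hc.mul_eq_of_two_mul_dotProduct_eq h,
      hr.mul_orientationCoef (fun a b hab => (hℓ a b hab).le)]
  · rw [hc.2.1 w u hwu, hr.isEdgeCoef.2.1 w u hwu]

noncomputable def descendantCount (r : V → V → Prop) (v : V) : ℕ :=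
  #{u | Relation.TransGen r v u}

theorem descendantCount_lt {r : V → V → Prop} (hr : ∀ v, ¬ Relation.TransGen r v v)
    {v w : V} (hvw : r v w) : descendantCount r w < descendantCount r v := by
  refine card_lt_card ((ssubset_iff_of_subset fun u hu => ?_).mpr ⟨w, ?_, ?_⟩)
  · simp only [mem_filter, mem_univ, true_and] at hu ⊢
    exact hu.head hvw
  · simpa using Relation.TransGen.single hvw
  · simpa using hr w

theorem eq_of_edgeSum_orientationCoef_eq {r r' : V → V → Prop} (hr : IsOrientation G r)
    (hac : ∀ v, ¬ Relation.TransGen r v v) (hr' : IsOrientation G r')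
    (h : edgeSum (orientationCoef r) = edgeSum (orientationCoef r')) : r = r' := by
  have hℓ : ∀ u v, r u v → (descendantCount r v : ℝ) < descendantCount r u :=
    fun _ _ huv => Nat.cast_lt.mpr (descendantCount_lt hac huv)
  refine orientationCoef_injective (hr.eq_orientationCoef hℓ hr'.isEdgeCoef ?_).symm
  rw [← h]
  exact hr.two_mul_dotProduct_eq fun u v huv => (hℓ u v huv).le

end Fintype

section Face

variable [DecidableEq V]

def updatePair (c : V → V → ℝ) (u v : V) (s : ℝ) : V → V → ℝ :=
  fun a b => if a = u ∧ b = v then s else if a = v ∧ b = u then -s else c a b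

variable {c : V → V → ℝ} {u v : V} {s : ℝ}

theorem IsEdgeCoef.updatePair (hc : IsEdgeCoef G c) (huv : G.Adj u v) (hs : |s| ≤ 1) :
    IsEdgeCoef G (updatePair c u v s) := by
  refine ⟨fun a b => ?_, fun a b hab => ?_, fun a b => ?_⟩ <;> unfold GraphicalZonotope.updatePair
  · have := hc.1 a b
    have := G.ne_of_adj huv
    split_ifs <;> grind
  · have h₁ : ¬ (a = u ∧ b = v) := by rintro ⟨rfl, rfl⟩; exact hab huv
    have h₂ : ¬ (a = v ∧ b = u) := by rintro ⟨rfl, rfl⟩; exact hab huv.symm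
    simp [h₁, h₂, hc.2.1 a b hab]
  · have := hc.2.2 a b
    split_ifs <;> simp [*]

variable [Fintype V]

theorem edgeSum_updatePair_self (huv : u ≠ v) :
    edgeSum (updatePair c u v s) u = edgeSum c u - c u v + s := by
  have hterm : ∀ b, updatePair c u v s u b = c u b + if b = v then s - c u v else 0 := by
    intro b
    by_cases hb : b = v
    · simp [updatePair, hb]
    · simp [updatePair, hb, huv]
  simp only [edgeSum, hterm, sum_add_distrib, sum_ite_eq', mem_univ, if_true]
  ring

theorem dotProduct_edgeSum_updatePair (hc : IsEdgeCoef G c) (huv : G.Adj u v) (hs : |s| ≤ 1)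
    {ℓ : V → ℝ} (hℓ : ℓ u = ℓ v) :
    ℓ ⬝ᵥ edgeSum (updatePair c u v s) = ℓ ⬝ᵥ edgeSum c := by
  have hterm : ∀ a b, (ℓ a - ℓ b) * updatePair c u v s a b = (ℓ a - ℓ b) * c a b := by
    intro a b
    unfold GraphicalZonotope.updatePair
    split_ifs with h₁ h₂
    · simp [h₁.1, h₁.2, hℓ]
    · simp [h₂.1, h₂.2, hℓ]
    · rfl
  have h := two_mul_dotProduct_edgeSum (hc.updatePair huv hs).1 ℓ
  simp only [hterm, ← two_mul_dotProduct_edgeSum hc.1] at h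
  linarith

theorem IsOrientation.maximizers_eq {r : V → V → Prop} (hr : IsOrientation G r) {ℓ : V → ℝ}
    (hℓ : ∀ u v, r u v → ℓ v < ℓ u) :
    {x ∈ graphicalZonotope G | ∀ y ∈ graphicalZonotope G, ℓ ⬝ᵥ y ≤ ℓ ⬝ᵥ x} =
      {edgeSum (orientationCoef r)} := by
  have hmax := hr.two_mul_dotProduct_eq fun u v huv => (hℓ u v huv).le
  have hmem : edgeSum (orientationCoef r) ∈ graphicalZonotope G :=
    mem_graphicalZonotope.mpr ⟨_, hr.isEdgeCoef, rfl⟩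
  ext x
  constructor
  · rintro ⟨hx, hx_max⟩
    obtain ⟨c, hc, rfl⟩ := mem_graphicalZonotope.mp hx
    have hle := hx_max _ hmem
    rw [hr.eq_orientationCoef hℓ hc (by linarith [hc.two_mul_dotProduct_le ℓ])]
    rfl
  · rintro rfl
    refine ⟨hmem, fun y hy => ?_⟩
    obtain ⟨c, hc, rfl⟩ := mem_graphicalZonotope.mp hy
    linarith [hc.two_mul_dotProduct_le ℓ]

theorem apply_ne_apply_of_maximizers_subsingleton {ℓ : V → ℝ}
    (hne : {x ∈ graphicalZonotope G | ∀ y ∈ graphicalZonotope G, ℓ ⬝ᵥ y ≤ ℓ ⬝ᵥ x}.Nonempty)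
    (hsub : {x ∈ graphicalZonotope G | ∀ y ∈ graphicalZonotope G, ℓ ⬝ᵥ y ≤ ℓ ⬝ᵥ x}.Subsingleton)
    (huv : G.Adj u v) : ℓ u ≠ ℓ v := by
  intro hℓ
  obtain ⟨_, hx, hx_max⟩ := hne
  obtain ⟨c, hc, rfl⟩ := mem_graphicalZonotope.mp hx
  have hmem : ∀ s : ℝ, |s| ≤ 1 → edgeSum (updatePair c u v s) ∈
      {x ∈ graphicalZonotope G | ∀ y ∈ graphicalZonotope G, ℓ ⬝ᵥ y ≤ ℓ ⬝ᵥ x} := fun s hs =>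
    ⟨mem_graphicalZonotope.mpr ⟨_, hc.updatePair huv hs, rfl⟩, by
      rwa [dotProduct_edgeSum_updatePair hc huv hs hℓ]⟩
  have h := congrFun (hsub (hmem 1 (by norm_num)) (hmem (-1) (by norm_num))) u
  rw [edgeSum_updatePair_self (G.ne_of_adj huv), edgeSum_updatePair_self (G.ne_of_adj huv)] at h
  linarith

theorem isExposed_singleton_edgeSum_orientationCoef {r : V → V → Prop}
    (hr : IsOrientation G r) (hac : ∀ v, ¬ Relation.TransGen r v v) :
    IsExposed ℝ (graphicalZonotope G) {edgeSum (orientationCoef r)} :=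
  isExposed_iff_exists_dotProduct.mpr fun _ => ⟨fun v => descendantCount r v,
    (hr.maximizers_eq fun _ _ h => Nat.cast_lt.mpr (descendantCount_lt hac h)).symm⟩

theorem exists_orientation_of_isExposed {F : Set (V → ℝ)} (hne : F.Nonempty)
    (hexp : IsExposed ℝ (graphicalZonotope G) F) (hsub : F.Subsingleton) :
    ∃ r, IsOrientation G r ∧ (∀ v, ¬ Relation.TransGen r v v) ∧
      F = {edgeSum (orientationCoef r)} := by
  obtain ⟨ℓ, rfl⟩ := isExposed_iff_exists_dotProduct.mp hexp hne
  let r : V → V → Prop := fun a b => G.Adj a b ∧ ℓ b < ℓ a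
  have hr : IsOrientation G r := by
    refine ⟨fun _ _ h => h.1, fun a b hab => ?_⟩
    rcases (apply_ne_apply_of_maximizers_subsingleton hne hsub hab).lt_or_gt with h | h
    · exact Or.inr ⟨⟨hab.symm, h⟩, fun h' => h'.2.asymm h⟩
    · exact Or.inl ⟨⟨hab, h⟩, fun h' => h'.2.asymm h⟩
  exact ⟨r, hr, Relation.not_transGen_self_of_lt fun _ _ h => h.2,
    hr.maximizers_eq fun _ _ h => h.2⟩

end Face

end GraphicalZonotope

open GraphicalZonotope in
theorem faceCount_zero_eq_acyclicOrientationCount_general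
    {V : Type} [Fintype V] [DecidableEq V] (G : SimpleGraph V) :
    faceCount G 0 = acyclicOrientationCount G := by
  unfold faceCount acyclicOrientationCount
  refine (Nat.card_eq_of_bijective (fun r => ⟨{edgeSum (orientationCoef r.1)},
      Set.singleton_nonempty _,
      isExposed_singleton_edgeSum_orientationCoef ⟨r.2.1, r.2.2.1⟩ r.2.2.2,
      finrank_direction_affineSpan_eq_zero_iff.mpr Set.subsingleton_singleton⟩)
    ⟨fun r r' h => ?_, fun F => ?_⟩).symm
  · exact Subtype.ext <| eq_of_edgeSum_orientationCoef_eq ⟨r.2.1, r.2.2.1⟩ r.2.2.2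
      ⟨r'.2.1, r'.2.2.1⟩ (Set.singleton_eq_singleton_iff.mp (congrArg Subtype.val h))
  · obtain ⟨F, hne, hexp, hdim⟩ := F
    obtain ⟨r, hr, hac, rfl⟩ := exists_orientation_of_isExposed hne hexp
      (finrank_direction_affineSpan_eq_zero_iff.mp hdim)
    exact ⟨⟨r, hr.1, hr.2, hac⟩, rfl⟩

/-- The number of vertices of the graphical zonotope equals the number of acyclic
orientations of the graph. -/
theorem faceCount_zero_eq_acyclicOrientationCount
    {V : Type} [Fintype V] [DecidableEq V] (G : SimpleGraph V) (hG : G.Connected) :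
    faceCount G 0 = acyclicOrientationCount G :=
  faceCount_zero_eq_acyclicOrientationCount_general G
end

section
/- Let n ≥ 3 and let C_n be the cycle graph on n vertices. For every k with 2 ≤ k ≤ n, the number of (n−k)-dimensional faces of the graphical zonotope Z_{C_n} equals (2^k − 2)·binomial(n,k). -/
open Polynomial

/-!
Put coefficients `b ∈ [-1, 1]^n` on the edge segments of `C_n`; then `Z_{C_n}` is the image of
the cube under the boundary map `∂b (w) = b (w - 1) - b w`, whose transpose is the difference
operator `δa (w) = a (w + 1) - a w`. The functional `a` is maximised on `Z_{C_n}` exactly on the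
image of the cube face cut out by the sign vector of `δa`, and the vectors `δa` are exactly the
zero-sum vectors. Hence the proper faces are the images `∂ F_σ` of the cube faces whose sign
vector `σ` takes both values `1` and `-1`. The kernel of `∂` consists of the constants, so `∂` is
injective on such a face: `∂ F_σ` has dimension `#{σ = 0}` and determines `σ`, while `Z_{C_n}`
itself has dimension `n - 1`. The `(n - k)`-faces therefore correspond to the sign vectors with
`k` nonzero entries that are not all equal, of which there are `(2^k - 2) · C(n, k)`.
-/

open Finset

lemma SignType.cast_real_inj {s t : SignType} : (s : ℝ) = t ↔ s = t := by
  constructor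
  · intro h
    cases s <;> cases t <;> first | rfl | norm_num at h
  · rintro rfl
    rfl

lemma mul_le_abs_of_abs_le_one (c : ℝ) {b : ℝ} (hb : |b| ≤ 1) : c * b ≤ |c| :=
  (le_abs_self _).trans (by rw [abs_mul]; exact mul_le_of_le_one_right (abs_nonneg c) hb)

lemma mul_eq_abs_iff {b c : ℝ} : c * b = |c| ↔ (c ≠ 0 → b = SignType.sign c) := by
  constructor
  · intro h hc
    rcases hc.lt_or_gt with hc | hc
    · rw [sign_neg hc, SignType.coe_neg_one]
      exact mul_left_cancel₀ hc.ne (h.trans (by rw [abs_of_neg hc]; ring))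
    · rw [sign_pos hc, SignType.coe_one]
      exact mul_left_cancel₀ hc.ne' (h.trans (by rw [abs_of_pos hc]; ring))
  · intro h
    by_cases hc : c = 0
    · simp [hc]
    · rw [h hc, self_mul_sign]

def cube (ι : Type*) : Set (ι → ℝ) := {b | ∀ i, |b i| ≤ 1}

section Cube

variable {ι : Type*}

def cubeFace (σ : ι → SignType) : Set (ι → ℝ) :=
  {b ∈ cube ι | ∀ i, σ i ≠ 0 → b i = σ i}

def cubeVertex (σ : ι → SignType) : ι → ℝ := fun i => σ i

lemma cubeFace_zero : cubeFace (0 : ι → SignType) = cube ι := by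
  simp [cubeFace]

lemma cubeFace_subset_cube (σ : ι → SignType) : cubeFace σ ⊆ cube ι := fun _ hb => hb.1

lemma cubeVertex_mem_cubeFace_iff {σ τ : ι → SignType} :
    cubeVertex σ ∈ cubeFace τ ↔ ∀ i, τ i ≠ 0 → σ i = τ i := by
  have hcube : cubeVertex σ ∈ cube ι := fun i => by
    rcases SignType.trichotomy (σ i) with h | h | h <;> simp [cubeVertex, h]
  simp [cubeFace, cubeVertex, hcube, SignType.cast_real_inj]

lemma cubeVertex_mem_cubeFace (σ : ι → SignType) : cubeVertex σ ∈ cubeFace σ :=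
  cubeVertex_mem_cubeFace_iff.2 fun _ _ => rfl

theorem setOf_forall_dotProduct_le_cube [Fintype ι] (c : ι → ℝ) :
    {b ∈ cube ι | ∀ b' ∈ cube ι, c ⬝ᵥ b' ≤ c ⬝ᵥ b} =
      cubeFace fun i => SignType.sign (c i) := by
  have hle : ∀ b ∈ cube ι, c ⬝ᵥ b ≤ ∑ i, |c i| := fun b hb =>
    sum_le_sum fun i _ => mul_le_abs_of_abs_le_one (c i) (hb i)
  have hvertex : c ⬝ᵥ cubeVertex (fun i => SignType.sign (c i)) = ∑ i, |c i| :=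
    sum_congr rfl fun i _ => self_mul_sign (c i)
  ext b
  constructor
  · rintro ⟨hb, hmax⟩
    have hsum : c ⬝ᵥ b = ∑ i, |c i| :=
      (hle b hb).antisymm (hvertex ▸ hmax _ (cubeVertex_mem_cubeFace _).1)
    have hterm := (sum_eq_sum_iff_of_le fun i _ => mul_le_abs_of_abs_le_one (c i) (hb i)).1 hsum
    exact ⟨hb, fun i hi => mul_eq_abs_iff.1 (hterm i (mem_univ i)) (sign_ne_zero.1 hi)⟩
  · rintro ⟨hb, hσ⟩
    have hsum : c ⬝ᵥ b = ∑ i, |c i| :=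
      sum_congr rfl fun i _ => mul_eq_abs_iff.2 fun hc => hσ i (sign_ne_zero.2 hc)
    exact ⟨hb, fun b' hb' => hsum ▸ hle b' hb'⟩

theorem direction_affineSpan_cubeFace [Fintype ι] [DecidableEq ι] (σ : ι → SignType) :
    (affineSpan ℝ (cubeFace σ)).direction =
      Submodule.span ℝ (Set.range fun i : {i // σ i = 0} => Pi.single (i : ι) (1 : ℝ)) := by
  set W := Submodule.span ℝ
    (Set.range fun i : {i // σ i = 0} => (Pi.single (i : ι) (1 : ℝ) : ι → ℝ))
  apply le_antisymm
  · have hsub : cubeFace σ ⊆ AffineSubspace.mk' (cubeVertex σ) W := by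
      rintro b ⟨-, hb⟩
      rw [SetLike.mem_coe, AffineSubspace.mem_mk', vsub_eq_sub,
        ← univ_sum_single (b - cubeVertex σ)]
      refine Submodule.sum_mem _ fun i _ => ?_
      by_cases hi : σ i = 0
      · simpa [← Pi.single_smul] using
          W.smul_mem ((b - cubeVertex σ) i) (Submodule.subset_span ⟨⟨i, hi⟩, rfl⟩)
      · simp [hb i hi, cubeVertex]
    calc _ ≤ (AffineSubspace.mk' (cubeVertex σ) W).direction :=
          AffineSubspace.direction_le (affineSpan_le.2 hsub)
      _ = W := AffineSubspace.direction_mk' _ _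
  · rw [Submodule.span_le]
    rintro - ⟨⟨i, hi⟩, rfl⟩
    have hmem : cubeVertex σ + Pi.single i (1 : ℝ) ∈ cubeFace σ := by
      refine ⟨fun j => ?_, fun j hj => ?_⟩
      · by_cases hji : j = i
        · subst hji
          simp [cubeVertex, hi]
        · simpa [hji] using (cubeVertex_mem_cubeFace σ).1 j
      · have hji : j ≠ i := by rintro rfl; exact hj hi
        simp [cubeVertex, hji]
    simpa using AffineSubspace.vsub_mem_direction (subset_affineSpan ℝ _ hmem)
      (subset_affineSpan ℝ _ (cubeVertex_mem_cubeFace σ))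

lemma strongDual_apply_eq_dotProduct [Fintype ι] [DecidableEq ι] (l : StrongDual ℝ (ι → ℝ))
    (x : ι → ℝ) : l x = (fun i => l (Pi.single i 1)) ⬝ᵥ x := by
  conv_lhs => rw [← univ_sum_single x]
  rw [map_sum]
  refine sum_congr rfl fun i _ => ?_
  rw [mul_comm, ← smul_eq_mul, ← map_smul, ← Pi.single_smul, smul_eq_mul, mul_one]

end Cube

section SignPattern

variable {ι : Type*}

def IsMixed (σ : ι → SignType) : Prop := (∃ i, σ i = 1) ∧ ∃ i, σ i = -1

instance [Fintype ι] : DecidablePred (IsMixed (ι := ι)) := fun σ =>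
  inferInstanceAs (Decidable ((∃ i, σ i = 1) ∧ ∃ i, σ i = -1))

lemma IsMixed.exists_ne_zero {σ : ι → SignType} (hσ : IsMixed σ) : ∃ i, σ i ≠ 0 :=
  let ⟨⟨i, hi⟩, _⟩ := hσ
  ⟨i, by simp [hi]⟩

theorem isMixed_sign_of_sum_eq_zero [Fintype ι] {d : ι → ℝ} (hd : ∑ i, d i = 0)
    (hne : d ≠ 0) :
    IsMixed fun i => SignType.sign (d i) := by
  obtain ⟨i₀, hi₀⟩ := Function.ne_iff.1 hne
  constructor
  · by_contra h
    simp only [sign_eq_one_iff, not_exists, not_lt] at h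
    exact hi₀ ((sum_eq_zero_iff_of_nonpos fun i _ => h i).1 hd i₀ (mem_univ _))
  · by_contra h
    simp only [sign_eq_neg_one_iff, not_exists, not_lt] at h
    exact hi₀ ((sum_eq_zero_iff_of_nonneg fun i _ => h i).1 hd i₀ (mem_univ _))

theorem exists_sum_eq_zero_sign_eq [Fintype ι] {σ : ι → SignType} (hσ : IsMixed σ) :
    ∃ d : ι → ℝ, ∑ i, d i = 0 ∧ (fun i => SignType.sign (d i)) = σ := by
  set P : ℝ := ((#{i | σ i = 1} : ℕ) : ℝ)
  set M : ℝ := ((#{i | σ i = -1} : ℕ) : ℝ)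
  have hP : 0 < P := by
    obtain ⟨i, hi⟩ := hσ.1
    exact Nat.cast_pos.2 (card_pos.2 ⟨i, by simp [hi]⟩)
  have hM : 0 < M := by
    obtain ⟨i, hi⟩ := hσ.2
    exact Nat.cast_pos.2 (card_pos.2 ⟨i, by simp [hi]⟩)
  refine ⟨fun i => M * (if σ i = 1 then 1 else 0) - P * (if σ i = -1 then 1 else 0), ?_, ?_⟩
  · simp only [sum_sub_distrib, ← mul_sum, sum_boole, P, M]
    ring
  · funext i
    rcases SignType.trichotomy (σ i) with h | h | h <;> simp [h, hP, hM]

theorem card_support_eq_and_isMixed [Fintype ι] [DecidableEq ι] {s : Finset ι}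
    (hs : s.Nonempty) :
    #{σ : ι → SignType | ({i | σ i ≠ 0} : Finset ι) = s ∧ IsMixed σ} = 2 ^ #s - 2 := by
  set t : Finset SignType → ι → Finset SignType := fun A i => if i ∈ s then A else {0}
  have hcard : ∀ A, #(Fintype.piFinset (t A)) = #A ^ #s := fun A => by
    simp [t, Fintype.card_piFinset, apply_ite card, prod_ite_mem]
  have hsupp : ∀ σ, σ ∈ Fintype.piFinset (t {-1, 1}) ↔
      ({i | σ i ≠ 0} : Finset ι) = s := by
    intro σ
    simp only [Fintype.mem_piFinset, Finset.ext_iff, mem_filter, mem_univ, true_and]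
    refine forall_congr' fun i => ?_
    by_cases hi : i ∈ s <;> rcases SignType.trichotomy (σ i) with h | h | h <;> simp [t, hi, h]
  have hpure : ∀ σ ∈ Fintype.piFinset (t {-1, 1}), ∀ x : SignType, x ≠ 0 →
      (σ ∈ Fintype.piFinset (t {x}) ↔ ∀ i, σ i ≠ -x) := by
    intro σ hσ x hx
    simp only [Fintype.mem_piFinset] at hσ ⊢
    refine forall_congr' fun i => ?_
    have := hσ i
    by_cases hi : i ∈ s <;> rcases SignType.trichotomy (σ i) with h | h | h <;>
      rcases SignType.trichotomy x with rfl | rfl | rfl <;> simp_all [t]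
  obtain ⟨i₀, hi₀⟩ := hs
  have hsub :
      Fintype.piFinset (t {1}) ∪ Fintype.piFinset (t {-1}) ⊆ Fintype.piFinset (t {-1, 1}) :=
    union_subset (Fintype.piFinset_subset _ _ fun i => by simp only [t]; split_ifs <;> simp)
      (Fintype.piFinset_subset _ _ fun i => by simp only [t]; split_ifs <;> simp)
  have hdisj : Disjoint (Fintype.piFinset (t {1})) (Fintype.piFinset (t {-1})) :=
    Fintype.piFinset_disjoint_of_disjoint _ _ (a := i₀) (by simp [t, hi₀])
  calc _ = #(Fintype.piFinset (t {-1, 1}) \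
        (Fintype.piFinset (t {1}) ∪ Fintype.piFinset (t {-1}))) := by
        congr 1
        ext σ
        rw [mem_filter, mem_sdiff, mem_union, ← hsupp]
        by_cases hσ : σ ∈ Fintype.piFinset (t {-1, 1})
        · rw [hpure σ hσ 1 one_ne_zero, hpure σ hσ (-1) (by decide), neg_neg]
          simp [hσ, IsMixed, and_comm]
        · simp [hσ]
    _ = 2 ^ #s - 2 := by
        rw [card_sdiff_of_subset hsub, card_union_of_disjoint hdisj, hcard, hcard, hcard]
        simp

theorem card_card_support_eq_and_isMixed [Fintype ι] [DecidableEq ι] {k : ℕ} (hk : 0 < k) :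
    #{σ : ι → SignType | #{i | σ i ≠ 0} = k ∧ IsMixed σ} =
      (2 ^ k - 2) * (Fintype.card ι).choose k := by
  rw [card_eq_sum_card_fiberwise (f := fun σ => ({i | σ i ≠ 0} : Finset ι))
    (t := powersetCard k univ) fun σ hσ => by simpa using (mem_filter.1 hσ).2.1]
  rw [sum_congr rfl fun s hs => ?_, sum_const, card_powersetCard, card_univ, smul_eq_mul, mul_comm]
  rw [mem_powersetCard_univ] at hs
  rw [filter_filter, ← hs, ← card_support_eq_and_isMixed (card_pos.1 (hs ▸ hk))]
  congr 1
  refine filter_congr fun σ _ => ?_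
  constructor
  · rintro ⟨⟨-, hmix⟩, rfl⟩
    exact ⟨rfl, hmix⟩
  · rintro ⟨rfl, hmix⟩
    exact ⟨⟨rfl, hmix⟩, rfl⟩

end SignPattern

section CycleBoundary

open scoped Fin.NatCast

variable {n : ℕ} [NeZero n]

/-- `b w` is the coefficient of the segment of the edge `{w, w + 1}`, oriented as
`e (w + 1) - e w`. -/
def cycleBoundary : (Fin n → ℝ) →ₗ[ℝ] (Fin n → ℝ) where
  toFun b w := b (w - 1) - b w
  map_add' b b' := by
    funext w
    simp only [Pi.add_apply]
    ring
  map_smul' r b := by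
    funext w
    simp only [Pi.smul_apply, smul_eq_mul, RingHom.id_apply]
    ring

lemma cycleBoundary_apply (b : Fin n → ℝ) (w : Fin n) : cycleBoundary b w = b (w - 1) - b w :=
  rfl

def cycleCoboundary (a : Fin n → ℝ) : Fin n → ℝ := fun w => a (w + 1) - a w

theorem dotProduct_cycleBoundary (a b : Fin n → ℝ) :
    a ⬝ᵥ cycleBoundary b = cycleCoboundary a ⬝ᵥ b := by
  have hshift : ∑ w, a w * b (w - 1) = ∑ w, a (w + 1) * b w :=
    Fintype.sum_equiv (Equiv.subRight 1) _ _ fun w => by simp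
  simp only [dotProduct, cycleBoundary_apply, cycleCoboundary, mul_sub, sub_mul, sum_sub_distrib,
    hshift]

theorem sum_cycleCoboundary (a : Fin n → ℝ) : ∑ w, cycleCoboundary a w = 0 := by
  simpa [dotProduct, cycleBoundary_apply] using (dotProduct_cycleBoundary a 1).symm

theorem exists_cycleCoboundary_eq {d : Fin n → ℝ} (hd : ∑ w, d w = 0) :
    ∃ a, cycleCoboundary a = d := by
  obtain ⟨m, rfl⟩ := Nat.exists_eq_add_one.2 (NeZero.pos n)
  have htotal : ∑ i ∈ range m, d i + d (Fin.last m) = 0 := by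
    rw [← Fin.natCast_eq_last, ← sum_range_succ, ← hd, ← Fin.sum_univ_eq_sum_range]
    simp only [Fin.cast_val_eq_self]
  refine ⟨fun v => ∑ i ∈ range v, d i, funext fun w => ?_⟩
  simp only [cycleCoboundary, Fin.val_add_one]
  split_ifs with hw
  · subst hw
    rw [range_zero, sum_empty, Fin.val_last]
    linarith
  · rw [sum_range_succ, Fin.cast_val_eq_self, add_sub_cancel_left]

theorem cycleBoundary_eq_zero_iff {b : Fin n → ℝ} :
    cycleBoundary b = 0 ↔ ∀ v w, b v = b w := by
  constructor
  · intro h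
    have hstep : ∀ w, b (w + 1) = b w := fun w => by
      have hw := congrFun h (w + 1)
      rw [cycleBoundary_apply, add_sub_cancel_right, Pi.zero_apply, sub_eq_zero] at hw
      exact hw.symm
    have hzero : ∀ m : ℕ, b m = b 0 := fun m => by
      induction m with
      | zero => simp
      | succ m ih => rw [Nat.cast_succ, hstep, ih]
    intro v w
    rw [← Fin.cast_val_eq_self v, ← Fin.cast_val_eq_self w, hzero, hzero]
  · intro h
    funext w
    simp [cycleBoundary_apply, h (w - 1) w]

end CycleBoundary

section CycleZonotope

variable {n : ℕ} [NeZero n]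

def cycleZonotopeFace (σ : Fin n → SignType) : Set (Fin n → ℝ) :=
  cycleBoundary '' cubeFace σ

/-- The kernel of `cycleBoundary` consists of the constants, and adding a nonzero constant pushes
a frozen `1` or `-1` out of the cube. -/
theorem eq_of_cycleBoundary_eq {τ : Fin n → SignType} (hτ : IsMixed τ) {b b' : Fin n → ℝ}
    (hb : b ∈ cubeFace τ) (hb' : b' ∈ cube (Fin n)) (h : cycleBoundary b' = cycleBoundary b) :
    b' = b := by
  have hconst := cycleBoundary_eq_zero_iff.1
    (by rw [map_sub, h, sub_self] : cycleBoundary (b' - b) = 0)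
  obtain ⟨⟨i, hi⟩, ⟨j, hj⟩⟩ := hτ
  have hbi : b i = 1 := by simpa [hi] using hb.2 i (by simp [hi])
  have hbj : b j = -1 := by simpa [hj] using hb.2 j (by simp [hj])
  have hij := hconst i j
  have hi' := abs_le.1 (hb' i)
  have hj' := abs_le.1 (hb' j)
  funext w
  have hw := hconst w i
  simp only [Pi.sub_apply] at hij hw
  linarith

theorem cycleZonotopeFace_injOn : Set.InjOn (cycleZonotopeFace (n := n)) {σ | IsMixed σ} := by
  have hagree : ∀ {σ τ : Fin n → SignType}, IsMixed τ →
      cycleZonotopeFace σ = cycleZonotopeFace τ → ∀ i, τ i ≠ 0 → σ i = τ i := by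
    intro σ τ hτ h
    obtain ⟨b, hb, hbσ⟩ : cycleBoundary (cubeVertex σ) ∈ cycleZonotopeFace τ :=
      h ▸ Set.mem_image_of_mem _ (cubeVertex_mem_cubeFace σ)
    rw [← cubeVertex_mem_cubeFace_iff,
      eq_of_cycleBoundary_eq hτ hb (cubeVertex_mem_cubeFace σ).1 hbσ.symm]
    exact hb
  intro σ hσ τ hτ h
  funext i
  by_cases hτi : τ i = 0
  · by_cases hσi : σ i = 0
    · rw [hσi, hτi]
    · exact (hagree hσ h.symm i hσi).symm
  · exact hagree hτ h i hτi

theorem linearIndependent_cycleBoundary_single {σ : Fin n → SignType} (hσ : ∃ w, σ w ≠ 0) :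
    LinearIndependent ℝ fun i : {i // σ i = 0} =>
      cycleBoundary (Pi.single (i : Fin n) (1 : ℝ)) := by
  obtain ⟨w₀, hw₀⟩ := hσ
  refine ((Pi.linearIndependent_single_one (Fin n) ℝ).comp _ Subtype.val_injective).map ?_
  rw [Submodule.disjoint_def]
  intro x hx hker
  obtain ⟨c, rfl⟩ := (Submodule.mem_span_range_iff_exists_fun ℝ).1 hx
  have hvanish : (∑ i : {i // σ i = 0}, c i • Pi.single (i : Fin n) (1 : ℝ)) w₀ = 0 := by
    simp only [Finset.sum_apply, Pi.smul_apply]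
    refine sum_eq_zero fun i _ => ?_
    have : w₀ ≠ i := fun h => hw₀ (h ▸ i.2)
    simp [this]
  funext v
  rw [cycleBoundary_eq_zero_iff.1 hker v w₀]
  exact hvanish

theorem finrank_direction_cycleZonotopeFace {σ : Fin n → SignType} (hσ : ∃ w, σ w ≠ 0) :
    Module.finrank ℝ (affineSpan ℝ (cycleZonotopeFace σ)).direction = #{w | σ w = 0} := by
  rw [cycleZonotopeFace, ← LinearMap.coe_toAffineMap, ← AffineSubspace.map_span,
    AffineSubspace.map_direction, direction_affineSpan_cubeFace, LinearMap.toAffineMap_linear,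
    Submodule.map_span, ← Set.range_comp]
  exact (finrank_span_eq_card (linearIndependent_cycleBoundary_single hσ)).trans
    (Fintype.card_subtype _)

theorem sub_one_le_finrank_direction_cycleBoundary_image_cube :
    n - 1 ≤ Module.finrank ℝ (affineSpan ℝ (cycleBoundary '' cube (Fin n))).direction := by
  have hσ : ∃ w, (Pi.single 0 1 : Fin n → SignType) w ≠ 0 := ⟨0, by simp⟩
  calc n - 1 = #{w | (Pi.single 0 1 : Fin n → SignType) w = 0} := by
        simp [Pi.single_apply, filter_ne', card_erase_of_mem]
    _ = _ := (finrank_direction_cycleZonotopeFace hσ).symm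
    _ ≤ _ := Submodule.finrank_mono (AffineSubspace.direction_le
        (affineSpan_mono ℝ (Set.image_mono (cubeFace_subset_cube _))))

end CycleZonotope

section Exposed

variable {n : ℕ} [NeZero n]

theorem toExposed_cycleBoundary_image_cube (l : StrongDual ℝ (Fin n → ℝ)) :
    l.toExposed (cycleBoundary '' cube (Fin n)) =
      cycleZonotopeFace fun w =>
        SignType.sign (cycleCoboundary (fun v => l (Pi.single v 1)) w) := by
  have hl : ∀ b, l (cycleBoundary b) = cycleCoboundary (fun v => l (Pi.single v 1)) ⬝ᵥ b :=
    fun b => by rw [strongDual_apply_eq_dotProduct, dotProduct_cycleBoundary]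
  rw [cycleZonotopeFace, ← setOf_forall_dotProduct_le_cube]
  ext x
  constructor
  · rintro ⟨⟨b, hb, rfl⟩, hmax⟩
    exact ⟨b, ⟨hb, fun b' hb' => by simpa only [hl] using hmax _ ⟨b', hb', rfl⟩⟩, rfl⟩
  · rintro ⟨b, ⟨hb, hmax⟩, rfl⟩
    exact ⟨⟨b, hb, rfl⟩, by rintro _ ⟨b', hb', rfl⟩; simpa only [hl] using hmax b' hb'⟩

theorem isExposed_cycleZonotopeFace {σ : Fin n → SignType} (hσ : IsMixed σ) :
    IsExposed ℝ (cycleBoundary '' cube (Fin n)) (cycleZonotopeFace σ) := fun _ => by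
  obtain ⟨d, hd, rfl⟩ := exists_sum_eq_zero_sign_eq hσ
  obtain ⟨a, rfl⟩ := exists_cycleCoboundary_eq hd
  set l : StrongDual ℝ (Fin n → ℝ) := ∑ w, a w • ContinuousLinearMap.proj w
  have ha : (fun v => l (Pi.single v 1)) = a := funext fun v => by simp [l, Pi.single_apply]
  refine ⟨l, ?_⟩
  have := toExposed_cycleBoundary_image_cube l
  rw [ha] at this
  exact this.symm

theorem exists_eq_cycleZonotopeFace_of_isExposed {F : Set (Fin n → ℝ)}
    (hF : IsExposed ℝ (cycleBoundary '' cube (Fin n)) F) (hne : F.Nonempty) :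
    ∃ σ, (σ = 0 ∨ IsMixed σ) ∧ F = cycleZonotopeFace σ := by
  obtain ⟨l, rfl⟩ := hF hne
  refine ⟨_, ?_, toExposed_cycleBoundary_image_cube l⟩
  by_cases h : cycleCoboundary (fun v => l (Pi.single v 1)) = 0
  · left
    funext w
    simp [h]
  · exact Or.inr (isMixed_sign_of_sum_eq_zero (sum_cycleCoboundary _) h)

end Exposed

lemma cycleGraph_adj_iff {m : ℕ} {u v : Fin (m + 2)} :
    (SimpleGraph.cycleGraph (m + 2)).Adj u v ↔ u = v + 1 ∨ v = u + 1 := by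
  rw [SimpleGraph.cycleGraph_adj, sub_eq_iff_eq_add', sub_eq_iff_eq_add']

lemma Fin.sub_one_ne_add_one {m : ℕ} (w : Fin (m + 3)) : w - 1 ≠ w + 1 := by
  intro h
  rw [sub_eq_iff_eq_add, add_assoc, left_eq_add, Fin.ext_iff] at h
  simp [Fin.val_add, Nat.mod_eq_of_lt (show 2 < m + 3 by omega)] at h

theorem graphicalZonotope_cycleGraph {n : ℕ} [NeZero n] (hn : 3 ≤ n) :
    graphicalZonotope (SimpleGraph.cycleGraph n) = cycleBoundary '' cube (Fin n) := by
  obtain ⟨m, rfl⟩ : ∃ m, n = m + 3 := ⟨n - 3, by omega⟩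
  ext x
  constructor
  · rintro ⟨c, hanti, hsupp, hbd, rfl⟩
    refine ⟨fun w => c (w + 1) w, fun w => hbd _ _, funext fun w => ?_⟩
    have hoff : ∀ u, u ≠ w - 1 ∧ u ≠ w + 1 → c w u = 0 := by
      rintro u ⟨h₁, h₂⟩
      refine hsupp w u ?_
      rw [cycleGraph_adj_iff, ← sub_eq_iff_eq_add]
      rintro (h | h)
      · exact h₁ h.symm
      · exact h₂ h
    rw [Fintype.sum_eq_add _ _ (Fin.sub_one_ne_add_one w) hoff, cycleBoundary_apply,
      sub_add_cancel, hanti w (w + 1), sub_eq_add_neg]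
  · rintro ⟨b, hb, rfl⟩
    have hnot : ∀ u v : Fin (m + 3), ¬(u = v + 1 ∧ v = u + 1) := by
      rintro u v ⟨rfl, h⟩
      exact Fin.sub_one_ne_add_one (v + 1) (by rw [add_sub_cancel_right]; exact h)
    refine ⟨fun u v => (if u = v + 1 then b v else 0) - (if v = u + 1 then b u else 0),
      fun u v => (neg_sub _ _).symm, fun u v huv => ?_, fun u v => ?_, funext fun w => ?_⟩
    · rw [cycleGraph_adj_iff, not_or] at huv
      simp [huv.1, huv.2]
    · dsimp only
      by_cases h₁ : u = v + 1
      · rw [if_pos h₁, if_neg fun h₂ => hnot u v ⟨h₁, h₂⟩, sub_zero]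
        exact hb v
      · by_cases h₂ : v = u + 1
        · rw [if_neg h₁, if_pos h₂, zero_sub, abs_neg]
          exact hb u
        · simp [h₁, h₂]
    · have hpred : ∀ u, w = u + 1 ↔ u = w - 1 := fun u => by rw [eq_sub_iff_add_eq, eq_comm]
      simp [cycleBoundary_apply, sum_sub_distrib, hpred]

theorem faceCount_cycleGraph_eq_card_isMixed {n : ℕ} [NeZero n] (hn : 3 ≤ n) {k : ℕ}
    (hk : 2 ≤ k) (hkn : k ≤ n) :
    faceCount (SimpleGraph.cycleGraph n) (n - k) =
      #{σ : Fin n → SignType | #{w | σ w ≠ 0} = k ∧ IsMixed σ} := by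
  have hzeros : ∀ σ : Fin n → SignType, #{w | σ w = 0} + #{w | σ w ≠ 0} = n := fun σ => by
    rw [card_filter_add_card_filter_not, card_univ, Fintype.card_fin]
  have hface : ∀ σ : Fin n → SignType, #{w | σ w ≠ 0} = k → IsMixed σ →
      (cycleZonotopeFace σ).Nonempty ∧
      IsExposed ℝ (cycleBoundary '' cube (Fin n)) (cycleZonotopeFace σ) ∧
      Module.finrank ℝ (affineSpan ℝ (cycleZonotopeFace σ)).direction = n - k :=
    fun σ hk hmix => ⟨⟨_, Set.mem_image_of_mem _ (cubeVertex_mem_cubeFace σ)⟩,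
      isExposed_cycleZonotopeFace hmix,
      by rw [finrank_direction_cycleZonotopeFace hmix.exists_ne_zero]; have := hzeros σ; omega⟩
  rw [faceCount, graphicalZonotope_cycleGraph hn, ← Fintype.card_subtype,
    ← Nat.card_eq_fintype_card]
  symm
  refine Nat.card_eq_of_bijective (fun σ => ⟨cycleZonotopeFace σ.1, hface σ.1 σ.2.1 σ.2.2⟩)
    ⟨fun σ τ h => Subtype.ext (cycleZonotopeFace_injOn σ.2.2 τ.2.2 (congrArg Subtype.val h)),
      ?_⟩
  rintro ⟨F, hne, hexp, hdim⟩
  obtain ⟨σ, rfl | hσ, rfl⟩ := exists_eq_cycleZonotopeFace_of_isExposed hexp hne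
  · rw [cycleZonotopeFace, cubeFace_zero] at hdim
    have := sub_one_le_finrank_direction_cycleBoundary_image_cube (n := n)
    omega
  · refine ⟨⟨σ, ?_, hσ⟩, rfl⟩
    rw [finrank_direction_cycleZonotopeFace hσ.exists_ne_zero] at hdim
    have := hzeros σ
    omega

/-- The number of `(n-k)`-dimensional faces of `Z_{C_n}` is `(2^k - 2) * (n choose k)`. -/
theorem faceCount_cycleGraph (n : ℕ) (hn : 3 ≤ n) (k : ℕ) (hk2 : 2 ≤ k) (hkn : k ≤ n) :
    faceCount (SimpleGraph.cycleGraph n) (n - k) = (2 ^ k - 2) * n.choose k := by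
  have : NeZero n := ⟨by omega⟩
  rw [faceCount_cycleGraph_eq_card_isMixed hn hk2 hkn,
    card_card_support_eq_and_isMixed (by omega), Fintype.card_fin]
end
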